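/- arXiv:0908.0064 — 12 statements merged into one kernel-verified Lean document; each statement's English description precedes it below -/
import Mathlib

section
/- Let ℝ^n be endowed with the max-norm ‖·‖∞. Call a pair (l,b) ∈ ℝ^n × ℝ^n admissible if ‖l‖∞ = 1, l_i > 0 for every i = 1,…,n, and ∑_{i=1}^n b_i = 0. Then for every pair (u,v) ∈ ℝ^n × ℝ^n with u_i < v_i for all i, there exist a unique admissible pair (l,b) and unique real numbers s < t such that u = s·l + b and v = t·l + b. Conversely, for every admissible pair (l,b) and all real numbers s < t, the points u = s·l + b and v = t·l + b satisfy u_i < v_i for all i. Hence the half-planes π_{(l,b)} = {(s·l + b, t·l + b) : s,t ∈ ℝ, s < t}, as (l,b) ranges over admissible pairs, form a partition (foliation) of the open set Δ⁺ = {(u,v) ∈ ℝ^n × ℝ^n : u_i < v_i for all i}. -/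
/-!
Subtracting the two equations gives `v - u = (t - s) • l`, so a unit vector `l` and a positive
`t - s` are forced to be the direction and the norm of `v - u`; this direction is positive
coordinatewise exactly because `u ≺ v`. Applying the functional `b ↦ ∑ i, b i`, which is
positive on `v - u`, to `u = s • l + b` then forces `s = (∑ i, u i) / ∑ i, l i` and `b = u - s • l`.
-/

open Finset

theorem eq_smul_add_and_map_eq_zero_iff {K M : Type*} [Field K] [AddCommGroup M] [Module K M]
    (φ : M →ₗ[K] K) {l : M} (hl : φ l ≠ 0) {u b : M} {s : K} :
    u = s • l + b ∧ φ b = 0 ↔ s = φ u / φ l ∧ b = u - s • l := by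
  constructor
  · rintro ⟨rfl, hb⟩
    simp [hb, hl]
  · rintro ⟨rfl, rfl⟩
    simp [hl]

section NormedSpace

variable {E : Type*} [NormedAddCommGroup E] [NormedSpace ℝ E]

theorem smul_eq_iff_of_norm_eq_one {c : ℝ} {l d : E} (hc : 0 < c) (hl : ‖l‖ = 1) :
    c • l = d ↔ c = ‖d‖ ∧ l = ‖d‖⁻¹ • d := by
  constructor
  · rintro rfl
    have hnorm : ‖c • l‖ = c := by rw [norm_smul, hl, mul_one, Real.norm_of_nonneg hc.le]
    rw [hnorm, smul_smul, inv_mul_cancel₀ hc.ne', one_smul]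
    exact ⟨rfl, rfl⟩
  · rintro ⟨rfl, rfl⟩
    rw [smul_smul, mul_inv_cancel₀ hc.ne', one_smul]

noncomputable def halfPlaneCoords (φ : E →ₗ[ℝ] ℝ) (u v : E) : E × E × ℝ × ℝ :=
  let l := ‖v - u‖⁻¹ • (v - u)
  let s := φ u / φ l
  (l, u - s • l, s, s + ‖v - u‖)

theorem halfPlaneCoords_iff (φ : E →ₗ[ℝ] ℝ) {u v : E} (h : φ (v - u) ≠ 0)
    {l b : E} {s t : ℝ} :
    (‖l‖ = 1 ∧ φ b = 0 ∧ s < t ∧ u = s • l + b ∧ v = t • l + b) ↔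
      (l, b, s, t) = halfPlaneCoords φ u v := by
  have hvu : v - u ≠ 0 := fun h0 => h (by simp [h0])
  have hnorm : 0 < ‖v - u‖ := norm_pos_iff.2 hvu
  have hunit : ‖‖v - u‖⁻¹ • (v - u)‖ = 1 := by
    rw [norm_smul, norm_inv, norm_norm, inv_mul_cancel₀ hnorm.ne']
  have hφl : φ (‖v - u‖⁻¹ • (v - u)) ≠ 0 := by
    rw [map_smul, smul_eq_mul]
    exact mul_ne_zero (inv_ne_zero hnorm.ne') h
  simp only [halfPlaneCoords, Prod.mk.injEq]
  constructor
  · rintro ⟨hl, hb, hst, hu, hv⟩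
    have hsub : (t - s) • l = v - u := by rw [hu, hv, sub_smul]; abel
    obtain ⟨hts, rfl⟩ := (smul_eq_iff_of_norm_eq_one (sub_pos.2 hst) hl).1 hsub
    obtain ⟨rfl, rfl⟩ := (eq_smul_add_and_map_eq_zero_iff φ hφl).1 ⟨hu, hb⟩
    refine ⟨rfl, rfl, rfl, by linarith⟩
  · rintro ⟨rfl, rfl, rfl, rfl⟩
    obtain ⟨hu, hb⟩ := (eq_smul_add_and_map_eq_zero_iff φ hφl).2 ⟨rfl, rfl⟩
    refine ⟨hunit, hb, by linarith, hu, ?_⟩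
    rw [add_smul, (smul_eq_iff_of_norm_eq_one hnorm hunit).2 ⟨rfl, rfl⟩]
    abel

end NormedSpace

theorem halfPlaneCoords_fst_pos {ι : Type*} [Fintype ι] (φ : (ι → ℝ) →ₗ[ℝ] ℝ) {u v : ι → ℝ}
    (huv : ∀ i, u i < v i) (i : ι) : 0 < (halfPlaneCoords φ u v).1 i := by
  have hvu : v - u ≠ 0 := fun h0 => (sub_pos.2 (huv i)).ne' (congrFun h0 i)
  exact mul_pos (inv_pos.2 (norm_pos_iff.2 hvu)) (sub_pos.2 (huv i))

/-- **Foliation of Δ⁺ by half-planes of admissible pairs.**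
A pair `(l, b)` in `ℝⁿ × ℝⁿ` is *admissible* if `‖l‖∞ = 1`, every component of `l`
is strictly positive, and the components of `b` sum to zero.  (The norm on
`Fin n → ℝ` is the sup-norm.)  For every `(u, v) ∈ Δ⁺` (i.e. `u i < v i` for all `i`)
there exist a unique admissible pair `(l, b)` and unique reals `s < t` with
`u = s • l + b` and `v = t • l + b`; conversely every such point lies in `Δ⁺`. -/
theorem foliation_of_delta_plus (n : ℕ) (hn : 0 < n) :
    (∀ u v : Fin n → ℝ, (∀ i, u i < v i) →
      ∃! q : (Fin n → ℝ) × (Fin n → ℝ) × ℝ × ℝ,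
        ‖q.1‖ = 1 ∧ (∀ i, 0 < q.1 i) ∧ (∑ i, q.2.1 i) = 0 ∧
          q.2.2.1 < q.2.2.2 ∧ u = q.2.2.1 • q.1 + q.2.1 ∧ v = q.2.2.2 • q.1 + q.2.1) ∧
    (∀ l b : Fin n → ℝ, ‖l‖ = 1 → (∀ i, 0 < l i) → (∑ i, b i) = 0 →
      ∀ s t : ℝ, s < t → ∀ i, (s • l + b) i < (t • l + b) i) := by
  refine ⟨fun u v huv => ?_, fun l b _ hl _ s t hst i => ?_⟩
  · let φ : (Fin n → ℝ) →ₗ[ℝ] ℝ := ∑ i, LinearMap.proj i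
    have hφ (x : Fin n → ℝ) : φ x = ∑ i, x i := by simp [φ]
    have hφvu : φ (v - u) ≠ 0 := by
      rw [hφ]
      have : Nonempty (Fin n) := ⟨⟨0, hn⟩⟩
      exact (sum_pos (fun i _ => sub_pos.2 (huv i)) univ_nonempty).ne'
    refine ⟨halfPlaneCoords φ u v, ?_, fun ⟨l, b, s, t⟩ ⟨hl, _, hb, hst, hu, hv⟩ => ?_⟩
    · obtain ⟨hl, hb, hst, hu, hv⟩ := (halfPlaneCoords_iff φ hφvu).2 rfl
      exact ⟨hl, halfPlaneCoords_fst_pos φ huv, (hφ _).symm.trans hb, hst, hu, hv⟩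
    · exact (halfPlaneCoords_iff φ hφvu).1 ⟨hl, (hφ b).trans hb, hst, hu, hv⟩
  · simpa using mul_lt_mul_of_pos_right hst (hl i)
end

section
/- Let X be a set, let φ, ψ : X → ℝ^n be functions with components φ_i, ψ_i, and let l, b ∈ ℝ^n with l_i > 0 for all i. Define F_{(l,b)}^φ(x) = max_i (φ_i(x) − b_i)/l_i and F_{(l,b)}^ψ(x) = max_i (ψ_i(x) − b_i)/l_i. Then for every x ∈ X, |F_{(l,b)}^φ(x) − F_{(l,b)}^ψ(x)| ≤ (max_i |φ_i(x) − ψ_i(x)|)/(min_i l_i). In particular, if X is a compact topological space and φ, ψ are continuous, then max_{x∈X} |F_{(l,b)}^φ(x) − F_{(l,b)}^ψ(x)| ≤ (max_{x∈X} ‖φ(x) − ψ(x)‖∞)/(min_i l_i). -/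
/-- The reduction function `F_{(l,b)}^φ(x) = max_i (φ_i(x) − b_i) / l_i`. -/
noncomputable def reductionFn {X : Type*} {n : ℕ} (l b : Fin (n + 1) → ℝ)
    (φ : X → Fin (n + 1) → ℝ) (x : X) : ℝ :=
  Finset.univ.sup' Finset.univ_nonempty fun i => (φ x i - b i) / l i

/-! The reduction is a maximum of the affine maps `u ↦ (u_i − b_i)/l_i`, the `i`-th of which is
`1/l_i`-Lipschitz; a finite maximum of `K`-Lipschitz maps is `K`-Lipschitz for the max-norm.
On a compact space `‖φ − ψ‖` is bounded, so its `⨆` is a true supremum and the pointwise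
bound passes to suprema. -/

namespace Finset

variable {ι : Type*} {s : Finset ι} (hs : s.Nonempty)

theorem sup'_sub_sup'_le {α : Type*} [AddCommGroup α] [LinearOrder α] [IsOrderedAddMonoid α]
    (f g : ι → α) : s.sup' hs f - s.sup' hs g ≤ s.sup' hs fun i => |f i - g i| := by
  refine sub_le_iff_le_add.2 (sup'_le hs f fun i hi => ?_)
  calc f i ≤ |f i - g i| + g i := sub_le_iff_le_add.1 (le_abs_self _)
    _ ≤ (s.sup' hs fun i => |f i - g i|) + s.sup' hs g :=
      add_le_add (le_sup' (fun i => |f i - g i|) hi) (le_sup' g hi)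

theorem abs_sup'_sub_sup'_le {α : Type*} [AddCommGroup α] [LinearOrder α] [IsOrderedAddMonoid α]
    (f g : ι → α) : |s.sup' hs f - s.sup' hs g| ≤ s.sup' hs fun i => |f i - g i| := by
  refine abs_sub_le_iff.2 ⟨sup'_sub_sup'_le hs f g, ?_⟩
  simpa only [abs_sub_comm] using sup'_sub_sup'_le hs g f

theorem sup'_div_le_sup'_div_inf' {a c : ι → ℝ} (ha : ∀ i ∈ s, 0 ≤ a i) (hc : ∀ i ∈ s, 0 < c i) :
    (s.sup' hs fun i => a i / c i) ≤ s.sup' hs a / s.inf' hs c :=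
  sup'_le hs _ fun i hi =>
    div_le_div₀ ((ha i hi).trans (le_sup' a hi)) (le_sup' a hi)
      ((lt_inf'_iff hs).2 hc) (inf'_le c hi)

theorem sup'_norm_le_pi_norm {E : Type*} [Fintype ι] [Nonempty ι] [SeminormedAddCommGroup E]
    (v : ι → E) : (univ.sup' univ_nonempty fun i => ‖v i‖) ≤ ‖v‖ :=
  sup'_le _ _ fun i _ => norm_le_pi_norm v i

end Finset

theorem abs_reductionFn_sub_le {X : Type*} {n : ℕ} (φ ψ : X → Fin (n + 1) → ℝ)
    (l b : Fin (n + 1) → ℝ) (hl : ∀ i, 0 < l i) (x : X) :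
    |reductionFn l b φ x - reductionFn l b ψ x| ≤
      (Finset.univ.sup' Finset.univ_nonempty fun i => |φ x i - ψ x i|) /
        Finset.univ.inf' Finset.univ_nonempty l := by
  have hcoord : ∀ i, |(φ x i - b i) / l i - (ψ x i - b i) / l i| = |φ x i - ψ x i| / l i :=
    fun i => by rw [← sub_div, sub_sub_sub_cancel_right, abs_div, abs_of_pos (hl i)]
  calc |reductionFn l b φ x - reductionFn l b ψ x|
      ≤ Finset.univ.sup' Finset.univ_nonempty fun i => |φ x i - ψ x i| / l i :=
        (Finset.abs_sup'_sub_sup'_le _ _ _).trans_eq (Finset.sup'_congr _ rfl fun i _ => hcoord i)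
    _ ≤ _ := Finset.sup'_div_le_sup'_div_inf' _ (fun i _ => abs_nonneg _) fun i _ => hl i

/-- **Stability of the reduction along a leaf.**
For every `x`, `|F_{(l,b)}^φ(x) − F_{(l,b)}^ψ(x)| ≤ (max_i |φ_i(x) − ψ_i(x)|) / (min_i l_i)`.
In particular, if `X` is a (nonempty) compact topological space and `φ, ψ` are continuous,
then `max_x |F_{(l,b)}^φ(x) − F_{(l,b)}^ψ(x)| ≤ (max_x ‖φ(x) − ψ(x)‖∞) / (min_i l_i)`. -/
theorem reduction_stability {X : Type*} (n : ℕ) (φ ψ : X → Fin (n + 1) → ℝ)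
    (l b : Fin (n + 1) → ℝ) (hl : ∀ i, 0 < l i) :
    (∀ x : X,
      |reductionFn l b φ x - reductionFn l b ψ x| ≤
        (Finset.univ.sup' Finset.univ_nonempty fun i => |φ x i - ψ x i|) /
          Finset.univ.inf' Finset.univ_nonempty l) ∧
    (∀ [TopologicalSpace X] [CompactSpace X] [Nonempty X],
      Continuous φ → Continuous ψ →
        (⨆ x : X, |reductionFn l b φ x - reductionFn l b ψ x|) ≤
          (⨆ x : X, ‖φ x - ψ x‖) / Finset.univ.inf' Finset.univ_nonempty l) := by
  refine ⟨abs_reductionFn_sub_le φ ψ l b hl, fun hφ hψ => ?_⟩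
  have hbdd : BddAbove (Set.range fun x => ‖φ x - ψ x‖) :=
    (isCompact_range (hφ.sub hψ).norm).bddAbove
  have hl_min : 0 ≤ Finset.univ.inf' Finset.univ_nonempty l :=
    ((Finset.lt_inf'_iff _).2 fun i _ => hl i).le
  refine ciSup_le fun x => (abs_reductionFn_sub_le φ ψ l b hl x).trans ?_
  refine div_le_div_of_nonneg_right ?_ hl_min
  calc (Finset.univ.sup' Finset.univ_nonempty fun i => |φ x i - ψ x i|)
      ≤ ‖φ x - ψ x‖ := Finset.sup'_norm_le_pi_norm (φ x - ψ x)
    _ ≤ ⨆ x, ‖φ x - ψ x‖ := le_ciSup hbdd x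
end

section
/- Let D = {(u,v) ∈ ℝ² : u ≤ v} and define d : D × D → ℝ by d((u,v),(u',v')) = min{ max(|u−u'|, |v−v'|), max((v−u)/2, (v'−u')/2) }. Then d is a pseudometric on D: d(p,p) = 0 for all p ∈ D; d(p,q) = d(q,p) for all p,q ∈ D; and d(p,r) ≤ d(p,q) + d(q,r) for all p,q,r ∈ D. Moreover d(p,q) = 0 whenever both p and q lie on the diagonal Δ = {(u,v) : u = v}. -/
/-- The region `D = {(u,v) ∈ ℝ² : u ≤ v}` above (and including) the diagonal. -/
def aboveDiag : Set (ℝ × ℝ) := {p | p.1 ≤ p.2}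

/-- The ground pseudodistance
`d(p,q) = min { max(|u−u'|, |v−v'|), max((v−u)/2, (v'−u')/2) }` between points
`p = (u,v)` and `q = (u',v')` of a persistence diagram. -/
noncomputable def diagDist (p q : ℝ × ℝ) : ℝ :=
  min (max |p.1 - q.1| |p.2 - q.2|) (max ((p.2 - p.1) / 2) ((q.2 - q.1) / 2))

/-- **The ground distance of persistence diagrams is a pseudometric on `D`.**
It vanishes on the diagonal pairs, is reflexive, symmetric, and satisfies the
triangle inequality. -/
theorem diagDist_pseudometric :
    (∀ p ∈ aboveDiag, diagDist p p = 0) ∧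
    (∀ p ∈ aboveDiag, ∀ q ∈ aboveDiag, diagDist p q = diagDist q p) ∧
    (∀ p ∈ aboveDiag, ∀ q ∈ aboveDiag, ∀ r ∈ aboveDiag,
      diagDist p r ≤ diagDist p q + diagDist q r) ∧
    (∀ p ∈ aboveDiag, ∀ q ∈ aboveDiag, p.1 = p.2 → q.1 = q.2 → diagDist p q = 0) := by
  refine ⟨?_, ?_, ?_, ?_⟩
  · intro p hp
    simp only [diagDist, sub_self, abs_zero, max_self]
    have h : (0:ℝ) ≤ (p.2 - p.1) / 2 := by
      have := hp; simp only [aboveDiag, Set.mem_setOf_eq] at this; linarith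
    simp [min_eq_left h]
  · intro p _ q _
    simp only [diagDist, abs_sub_comm p.1 q.1, abs_sub_comm p.2 q.2, max_comm]
  · intro p hp q hq r hr
    simp only [aboveDiag, Set.mem_setOf_eq] at hp hq hr
    simp only [diagDist]
    have a1 : |p.1 - r.1| ≤ |p.1 - q.1| + |q.1 - r.1| := abs_sub_le _ _ _
    have a2 : |p.2 - r.2| ≤ |p.2 - q.2| + |q.2 - r.2| := abs_sub_le _ _ _
    have m1 : |p.1 - q.1| ≤ max |p.1 - q.1| |p.2 - q.2| := le_max_left _ _
    have m2 : |p.2 - q.2| ≤ max |p.1 - q.1| |p.2 - q.2| := le_max_right _ _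
    have m3 : |q.1 - r.1| ≤ max |q.1 - r.1| |q.2 - r.2| := le_max_left _ _
    have m4 : |q.2 - r.2| ≤ max |q.1 - r.1| |q.2 - r.2| := le_max_right _ _
    have b1 : q.1 - p.1 ≤ |p.1 - q.1| := by rw [abs_sub_comm]; exact le_abs_self _
    have b2 : p.2 - q.2 ≤ |p.2 - q.2| := le_abs_self _
    have b3 : r.1 - q.1 ≤ |q.1 - r.1| := by rw [abs_sub_comm]; exact le_abs_self _
    have b4 : q.2 - r.2 ≤ |q.2 - r.2| := le_abs_self _
    have c1 : p.1 - q.1 ≤ |p.1 - q.1| := le_abs_self _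
    have c2 : q.2 - p.2 ≤ |p.2 - q.2| := by rw [abs_sub_comm]; exact le_abs_self _
    have c3 : q.1 - r.1 ≤ |q.1 - r.1| := le_abs_self _
    have c4 : r.2 - q.2 ≤ |q.2 - r.2| := by rw [abs_sub_comm]; exact le_abs_self _
    have Mnn1 : (0:ℝ) ≤ max |p.1 - q.1| |p.2 - q.2| := le_trans (abs_nonneg _) m1
    have Mnn2 : (0:ℝ) ≤ max |q.1 - r.1| |q.2 - r.2| := le_trans (abs_nonneg _) m3
    rcases min_cases (max |p.1 - q.1| |p.2 - q.2|)
        (max ((p.2 - p.1) / 2) ((q.2 - q.1) / 2)) with ⟨h1, h1'⟩ | ⟨h1, h1'⟩ <;>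
      rcases min_cases (max |q.1 - r.1| |q.2 - r.2|)
        (max ((q.2 - q.1) / 2) ((r.2 - r.1) / 2)) with ⟨h2, h2'⟩ | ⟨h2, h2'⟩ <;>
      rw [h1, h2]
    · -- A + A
      refine le_trans (min_le_left _ _) (max_le ?_ ?_)
      · exact le_trans a1 (add_le_add m1 m3)
      · exact le_trans a2 (add_le_add m2 m4)
    · -- A + B
      refine le_trans (min_le_right _ _) (max_le ?_ ?_)
      · have hq1 : (q.2 - q.1) / 2 ≤ max ((q.2 - q.1) / 2) ((r.2 - r.1) / 2) := le_max_left _ _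
        linarith
      · have hr1 : (r.2 - r.1) / 2 ≤ max ((q.2 - q.1) / 2) ((r.2 - r.1) / 2) := le_max_right _ _
        linarith
    · -- B + A
      refine le_trans (min_le_right _ _) (max_le ?_ ?_)
      · have hp1 : (p.2 - p.1) / 2 ≤ max ((p.2 - p.1) / 2) ((q.2 - q.1) / 2) := le_max_left _ _
        linarith
      · have hq1 : (q.2 - q.1) / 2 ≤ max ((p.2 - p.1) / 2) ((q.2 - q.1) / 2) := le_max_right _ _
        linarith
    · -- B + B
      refine le_trans (min_le_right _ _) (max_le ?_ ?_)
      · have hp1 : (p.2 - p.1) / 2 ≤ max ((p.2 - p.1) / 2) ((q.2 - q.1) / 2) := le_max_left _ _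
        have hq2 : (q.2 - q.1) / 2 ≤ max ((q.2 - q.1) / 2) ((r.2 - r.1) / 2) := le_max_left _ _
        linarith
      · have hr1 : (r.2 - r.1) / 2 ≤ max ((q.2 - q.1) / 2) ((r.2 - r.1) / 2) := le_max_right _ _
        have hq2 : (q.2 - q.1) / 2 ≤ max ((p.2 - p.1) / 2) ((q.2 - q.1) / 2) := le_max_right _ _
        linarith
  · intro p _ q _ hpd hqd
    simp [diagDist, hpd, hqd]
end

section
/- Let (V_u, π^{u,v}) be a persistence module over a field K, and fix ū < v̄ in ℝ. Assume that the rank of π^{u,v̄} : V_u → V_{v̄} is finite for every u with ū < u < v̄. Then there exists û with ū < û < v̄ such that for all u', u'' with ū < u' ≤ u'' ≤ û, the image of π^{u',v̄} equals the image of π^{u'',v̄} (so that the inclusion of images σ^{(u',u'')} : im π^{u',v̄} → im π^{u'',v̄} induced by π^{u',u''} is an isomorphism). -/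
/-- A persistence module over a field `K`: a family of `K`-vector spaces `V u`
indexed by `u ∈ ℝ` with linear maps `π^{u,v} : V u → V v` for `u ≤ v` satisfying
`π^{u,u} = id` and `π^{v,w} ∘ π^{u,v} = π^{u,w}`. -/
structure PersistenceModule (K : Type*) [Field K] where
  V : ℝ → Type*
  [addCommGroup : ∀ u, AddCommGroup (V u)]
  [module : ∀ u, Module K (V u)]
  π : ∀ {u v : ℝ}, u ≤ v → (V u →ₗ[K] V v)
  π_id : ∀ u : ℝ, π (le_refl u) = LinearMap.id
  π_comp : ∀ {u v w : ℝ} (huv : u ≤ v) (hvw : v ≤ w),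
    (π hvw).comp (π huv) = π (huv.trans hvw)

attribute [instance] PersistenceModule.addCommGroup PersistenceModule.module

/-- **Right constancy of the images `im π^{·, v̄}` near `ū` (Lemma on σ-maps).**
If the rank of `π^{u, v̄}` is finite for every `u ∈ (ū, v̄)`, then there is
`û ∈ (ū, v̄)` such that for all `ū < u' ≤ u'' ≤ û` the images of `π^{u', v̄}` and
`π^{u'', v̄}` coincide, i.e. the inclusions `σ^{(u',u'')}` induced by `π^{u',u''}`
are isomorphisms. -/
theorem images_eventually_constant_in_first_variable {K : Type*} [Field K]
    (M : PersistenceModule K) (ubar vbar : ℝ) (hbar : ubar < vbar)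
    (hfin : ∀ (u : ℝ) (_ : ubar < u) (h2 : u < vbar),
      Module.Finite K ↥(LinearMap.range (M.π h2.le))) :
    ∃ (uhat : ℝ) (_ : ubar < uhat) (hhat : uhat < vbar),
      ∀ (u' u'' : ℝ) (_ : ubar < u') (h12 : u' ≤ u'') (h2 : u'' ≤ uhat),
        LinearMap.range (M.π ((h12.trans h2).trans hhat.le)) =
          LinearMap.range (M.π (h2.trans hhat.le)) := by
  classical
  set m := (ubar + vbar) / 2 with hm
  have hum : ubar < m := by simp only [hm]; linarith
  have hmv : m < vbar := by simp only [hm]; linarith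
  -- monotonicity of ranges
  have key : ∀ {u1 u2 : ℝ} (h12 : u1 ≤ u2) (h1 : u1 ≤ vbar) (h2 : u2 ≤ vbar),
      LinearMap.range (M.π h1) ≤ LinearMap.range (M.π h2) := by
    intro u1 u2 h12 h1 h2
    have hcomp : M.π h1 = (M.π h2).comp (M.π h12) := (M.π_comp h12 h2).symm
    rw [hcomp]
    exact LinearMap.range_comp_le_range _ _
  -- the set of ranks for u ∈ (ubar, m]
  let S : Set ℕ := {n | ∃ (u : ℝ) (_ : ubar < u) (h2 : u ≤ m),
      n = Module.finrank K (LinearMap.range (M.π (h2.trans hmv.le)))}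
  have hS : S.Nonempty := ⟨_, m, hum, le_refl m, rfl⟩
  obtain ⟨uhat, h1hat, h2hat, hval⟩ := Nat.sInf_mem hS
  refine ⟨uhat, h1hat, lt_of_le_of_lt h2hat hmv, ?_⟩
  intro u' u'' h1' h12 h2
  have h1'' : ubar < u'' := lt_of_lt_of_le h1' h12
  have hu'v : u' ≤ vbar := (h12.trans h2).trans (h2hat.trans hmv.le)
  have hu''v : u'' ≤ vbar := h2.trans (h2hat.trans hmv.le)
  have huhv : uhat ≤ vbar := h2hat.trans hmv.le
  have hu'lt : u' < vbar := lt_of_le_of_lt ((h12.trans h2).trans h2hat) hmv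
  have hu''lt : u'' < vbar := lt_of_le_of_lt (h2.trans h2hat) hmv
  have huhlt : uhat < vbar := lt_of_le_of_lt h2hat hmv
  have inst1 : Module.Finite K ↥(LinearMap.range (M.π hu'lt.le)) := hfin u' h1' hu'lt
  have inst2 : Module.Finite K ↥(LinearMap.range (M.π hu''lt.le)) := hfin u'' h1'' hu''lt
  have insth : Module.Finite K ↥(LinearMap.range (M.π huhlt.le)) := hfin uhat h1hat huhlt
  -- inclusions
  have le12 : LinearMap.range (M.π hu'lt.le) ≤ LinearMap.range (M.π hu''lt.le) :=
    key h12 _ _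
  have le2h : LinearMap.range (M.π hu''lt.le) ≤ LinearMap.range (M.π huhlt.le) :=
    key h2 _ _
  -- finrank comparisons
  have hr1 : Module.finrank K (LinearMap.range (M.π huhlt.le)) ≤
      Module.finrank K (LinearMap.range (M.π hu'lt.le)) := by
    rw [← hval]
    exact Nat.sInf_le ⟨u', h1', (h12.trans h2).trans h2hat, rfl⟩
  have hr2 : Module.finrank K (LinearMap.range (M.π hu'lt.le)) ≤
      Module.finrank K (LinearMap.range (M.π hu''lt.le)) :=
    Submodule.finrank_mono le12
  have hr3 : Module.finrank K (LinearMap.range (M.π hu''lt.le)) ≤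
      Module.finrank K (LinearMap.range (M.π huhlt.le)) :=
    Submodule.finrank_mono le2h
  have heq : LinearMap.range (M.π hu'lt.le) = LinearMap.range (M.π hu''lt.le) :=
    Submodule.eq_of_le_of_finrank_le le12 (by omega)
  exact heq
end

section
/- Let (V_u, π^{u,v}) be a persistence module over a field K such that the rank ρ(u,v) of π^{u,v} is finite for all u < v. Then for all real numbers u₁ ≤ u₂ < v₁ ≤ v₂, the following inequality holds: ρ(u₂,v₁) − ρ(u₁,v₁) ≥ ρ(u₂,v₂) − ρ(u₁,v₂); equivalently, ρ(u₂,v₁) + ρ(u₁,v₂) ≥ ρ(u₁,v₁) + ρ(u₂,v₂). -/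
open Module LinearMap in
lemma key_ineq {K V W : Type*} [Field K] [AddCommGroup V] [Module K V]
    [AddCommGroup W] [Module K W] (g : V →ₗ[K] W) (p q : Submodule K V)
    (hpq : p ≤ q) [Module.Finite K p] [Module.Finite K q] :
    finrank K q + finrank K (p.map g) ≥ finrank K p + finrank K (q.map g) := by
  have hp := LinearMap.finrank_range_add_finrank_ker (g.domRestrict p)
  have hq := LinearMap.finrank_range_add_finrank_ker (g.domRestrict q)
  rw [LinearMap.range_domRestrict] at hp hq
  have hker : finrank K (ker (g.domRestrict p)) ≤ finrank K (ker (g.domRestrict q)) := by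
    refine LinearMap.finrank_le_finrank_of_injective
      (f := LinearMap.codRestrict _ ((Submodule.inclusion hpq).comp (ker (g.domRestrict p)).subtype)
        (by rintro ⟨⟨x, hx⟩, hk⟩; simpa using hk)) ?_
    exact ((Submodule.inclusion_injective hpq).comp Subtype.val_injective).codRestrict _
  omega


/-- **Jump Monotonicity.**  If the rank `ρ(u,v) = rank π^{u,v}` is finite for all
`u < v`, then for all `u₁ ≤ u₂ < v₁ ≤ v₂` one has
`ρ(u₂,v₁) + ρ(u₁,v₂) ≥ ρ(u₁,v₁) + ρ(u₂,v₂)`, i.e.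
`ρ(u₂,v₁) − ρ(u₁,v₁) ≥ ρ(u₂,v₂) − ρ(u₁,v₂)`. -/
theorem rank_jump_monotonicity {K : Type*} [Field K] (M : PersistenceModule K)
    (hfin : ∀ (u v : ℝ) (h : u < v),
      Module.Finite K ↥(LinearMap.range (M.π h.le)))
    (u₁ u₂ v₁ v₂ : ℝ) (h12 : u₁ ≤ u₂) (h2v : u₂ < v₁) (hv12 : v₁ ≤ v₂) :
    Module.finrank K ↥(LinearMap.range (M.π h2v.le)) +
        Module.finrank K ↥(LinearMap.range (M.π ((h12.trans h2v.le).trans hv12))) ≥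
      Module.finrank K ↥(LinearMap.range (M.π (h12.trans h2v.le))) +
        Module.finrank K ↥(LinearMap.range (M.π (h2v.le.trans hv12))) := by
  haveI := hfin u₁ v₁ (lt_of_le_of_lt h12 h2v)
  haveI := hfin u₂ v₁ h2v
  have e1 : M.π ((h12.trans h2v.le).trans hv12)
      = (M.π hv12).comp (M.π (h12.trans h2v.le)) := (M.π_comp _ _).symm
  have e2 : M.π (h2v.le.trans hv12) = (M.π hv12).comp (M.π h2v.le) := (M.π_comp _ _).symm
  rw [e1, e2, LinearMap.range_comp, LinearMap.range_comp]
  refine key_ineq (M.π hv12) _ _ ?_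
  rw [show M.π (h12.trans h2v.le) = (M.π h2v.le).comp (M.π h12) from (M.π_comp _ _).symm]
  exact LinearMap.range_comp_le_range _ _
end

section
/- Let ρ : Δ⁺ → ℕ be an abstract rank invariant. Then for every (ū,v̄) ∈ Δ⁺, the function E(ε) = ρ(ū+ε, v̄−ε) − ρ(ū−ε, v̄−ε) − ρ(ū+ε, v̄+ε) + ρ(ū−ε, v̄+ε), defined for all ε with 0 < ε < (v̄−ū)/2, takes non-negative values and is non-decreasing in ε; consequently E attains a minimum value over all admissible ε, and this minimum is attained for all sufficiently small ε > 0. (Hence the multiplicity μ(ū,v̄) is a well-defined natural number.) -/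
/-- An abstract rank invariant on `Δ⁺ = {(u,v) : u < v}`: a function
`ρ : Δ⁺ → ℕ` (here extended arbitrarily to all of `ℝ × ℝ`; only its values on
`Δ⁺` are ever constrained or used) that is non-decreasing in `u`,
non-increasing in `v`, and satisfies jump monotonicity. -/
structure AbstractRankInvariant where
  ρ : ℝ → ℝ → ℕ
  mono_u : ∀ ⦃u₁ u₂ v : ℝ⦄, u₁ ≤ u₂ → u₂ < v → ρ u₁ v ≤ ρ u₂ v
  mono_v : ∀ ⦃u v₁ v₂ : ℝ⦄, u < v₁ → v₁ ≤ v₂ → ρ u v₂ ≤ ρ u v₁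
  jump : ∀ ⦃u₁ u₂ v₁ v₂ : ℝ⦄, u₁ ≤ u₂ → u₂ < v₁ → v₁ ≤ v₂ →
    ρ u₁ v₁ + ρ u₂ v₂ ≤ ρ u₂ v₁ + ρ u₁ v₂

namespace AbstractRankInvariant

/-- The integer quantity
`E(ε) = ρ(ū+ε, v̄−ε) − ρ(ū−ε, v̄−ε) − ρ(ū+ε, v̄+ε) + ρ(ū−ε, v̄+ε)`
whose minimum over admissible `ε` is the multiplicity of `(ū,v̄)`. -/
def cornerE (R : AbstractRankInvariant) (u v ε : ℝ) : ℤ :=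
  (R.ρ (u + ε) (v - ε) : ℤ) - (R.ρ (u - ε) (v - ε) : ℤ)
    - (R.ρ (u + ε) (v + ε) : ℤ) + (R.ρ (u - ε) (v + ε) : ℤ)

/-- The multiplicity `μ(ū,v̄)`: the minimum of `E(ε)` over all `ε > 0` with
`ū + ε < v̄ − ε` (a natural number, since `E(ε) ≥ 0`). -/
noncomputable def mult (R : AbstractRankInvariant) (u v : ℝ) : ℕ :=
  sInf ((fun ε => (R.cornerE u v ε).toNat) '' {ε : ℝ | 0 < ε ∧ u + ε < v - ε})

/-- The multiplicity at infinity `μ∞(ū)`: the minimum of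
`ρ(ū+ε, 1/ε) − ρ(ū−ε, 1/ε)` over all `ε > 0` with `ū + ε < 1/ε`. -/
noncomputable def multInf (R : AbstractRankInvariant) (u : ℝ) : ℕ :=
  sInf ((fun ε => ((R.ρ (u + ε) (1 / ε) : ℤ) - (R.ρ (u - ε) (1 / ε) : ℤ)).toNat) ''
    {ε : ℝ | 0 < ε ∧ u + ε < 1 / ε})

/-- Right-continuity of `ρ` in each variable (as a function on `Δ⁺`; since `ρ` is
integer-valued, the right limits are attained, i.e. `ρ` is locally constant on
the right of each point of `Δ⁺`). -/
def RightContinuous (R : AbstractRankInvariant) : Prop :=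
  ∀ u v : ℝ, u < v →
    (∃ δ > 0, ∀ u', u < u' → u' < u + δ → u' < v → R.ρ u' v = R.ρ u v) ∧
    (∃ δ > 0, ∀ v', v < v' → v' < v + δ → R.ρ u v' = R.ρ u v)

/-- Discontinuity of the function `u ↦ ρ(u, v)` (on the domain `{u : u < v}`)
at the point `ū`. -/
def DiscontAtU (R : AbstractRankInvariant) (ubar v : ℝ) : Prop :=
  ¬ ∃ δ > 0, ∀ u', u' < v → |u' - ubar| < δ → R.ρ u' v = R.ρ ubar v

/-- Discontinuity of the function `v ↦ ρ(u, v)` (on the domain `{v : u < v}`)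
at the point `v̄`. -/
def DiscontAtV (R : AbstractRankInvariant) (u vbar : ℝ) : Prop :=
  ¬ ∃ δ > 0, ∀ v', u < v' → |v' - vbar| < δ → R.ρ u v' = R.ρ u vbar

end AbstractRankInvariant

open AbstractRankInvariant

/-- **The multiplicity is a well-defined natural number.**  For `(ū,v̄) ∈ Δ⁺`, the
quantity `E(ε) = ρ(ū+ε,v̄−ε) − ρ(ū−ε,v̄−ε) − ρ(ū+ε,v̄+ε) + ρ(ū−ε,v̄+ε)` is
non-negative and non-decreasing on the admissible range `0 < ε`, `ū+ε < v̄−ε`;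
hence it attains a minimum (equal to the multiplicity `μ(ū,v̄)`), and this
minimum is attained for all sufficiently small `ε > 0`. -/
theorem multiplicity_well_defined (R : AbstractRankInvariant) (ubar vbar : ℝ)
    (h : ubar < vbar) :
    (∀ ε : ℝ, 0 < ε → ubar + ε < vbar - ε → 0 ≤ R.cornerE ubar vbar ε) ∧
    (∀ ε₁ ε₂ : ℝ, 0 < ε₁ → ε₁ ≤ ε₂ → ubar + ε₂ < vbar - ε₂ →
      R.cornerE ubar vbar ε₁ ≤ R.cornerE ubar vbar ε₂) ∧
    (∃ ε₀ : ℝ, 0 < ε₀ ∧ ubar + ε₀ < vbar - ε₀ ∧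
      (∀ ε : ℝ, 0 < ε → ubar + ε < vbar - ε →
        R.cornerE ubar vbar ε₀ ≤ R.cornerE ubar vbar ε) ∧
      R.cornerE ubar vbar ε₀ = (R.mult ubar vbar : ℤ) ∧
      (∀ ε : ℝ, 0 < ε → ε ≤ ε₀ →
        R.cornerE ubar vbar ε = R.cornerE ubar vbar ε₀)) := by

  -- nonnegativity
  have nonneg : ∀ ε : ℝ, 0 < ε → ubar + ε < vbar - ε → 0 ≤ R.cornerE ubar vbar ε := by
    intro ε hε hlt
    have h1 : ubar - ε ≤ ubar + ε := by linarith
    have h2 : vbar - ε ≤ vbar + ε := by linarith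
    have := R.jump h1 hlt h2
    unfold AbstractRankInvariant.cornerE
    omega
  have mono : ∀ ε₁ ε₂ : ℝ, 0 < ε₁ → ε₁ ≤ ε₂ → ubar + ε₂ < vbar - ε₂ →
      R.cornerE ubar vbar ε₁ ≤ R.cornerE ubar vbar ε₂ := by
    intro ε₁ ε₂ h1 h12 h2
    have j1 := R.jump (u₁ := ubar - ε₂) (u₂ := ubar - ε₁) (v₁ := vbar - ε₂) (v₂ := vbar + ε₂)
      (by linarith) (by linarith) (by linarith)
    have j2 := R.jump (u₁ := ubar + ε₁) (u₂ := ubar + ε₂) (v₁ := vbar - ε₂) (v₂ := vbar + ε₂)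
      (by linarith) (by linarith) (by linarith)
    have j3 := R.jump (u₁ := ubar - ε₁) (u₂ := ubar + ε₁) (v₁ := vbar - ε₂) (v₂ := vbar - ε₁)
      (by linarith) (by linarith) (by linarith)
    have j4 := R.jump (u₁ := ubar - ε₁) (u₂ := ubar + ε₁) (v₁ := vbar + ε₁) (v₂ := vbar + ε₂)
      (by linarith) (by linarith) (by linarith)
    unfold AbstractRankInvariant.cornerE
    omega
  refine ⟨nonneg, mono, ?_⟩
  set S := ((fun ε => (R.cornerE ubar vbar ε).toNat) '' {ε : ℝ | 0 < ε ∧ ubar + ε < vbar - ε})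
    with hS
  have hne : S.Nonempty := by
    refine ⟨(R.cornerE ubar vbar ((vbar - ubar)/4)).toNat, ⟨(vbar - ubar)/4, ⟨by linarith, by linarith⟩, rfl⟩⟩
  obtain ⟨ε₀, ⟨hε₀pos, hε₀lt⟩, hε₀⟩ := Nat.sInf_mem hne
  have hnn₀ := nonneg ε₀ hε₀pos hε₀lt
  have hval : R.cornerE ubar vbar ε₀ = (R.mult ubar vbar : ℤ) := by
    rw [AbstractRankInvariant.mult, ← hS, ← hε₀, Int.toNat_of_nonneg hnn₀]
  have hmin : ∀ ε : ℝ, 0 < ε → ubar + ε < vbar - ε →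
      R.cornerE ubar vbar ε₀ ≤ R.cornerE ubar vbar ε := by
    intro ε hp hl
    have hmem : (R.cornerE ubar vbar ε).toNat ∈ S := ⟨ε, ⟨hp, hl⟩, rfl⟩
    have h1 : (R.cornerE ubar vbar ε₀).toNat = sInf S := hε₀
    have h0 : (R.cornerE ubar vbar ε₀).toNat ≤ (R.cornerE ubar vbar ε).toNat :=
      h1 ▸ Nat.sInf_le hmem
    have hnnε := nonneg ε hp hl
    omega
  refine ⟨ε₀, hε₀pos, hε₀lt, hmin, hval, ?_⟩
  intro ε hp hle
  have hl : ubar + ε < vbar - ε := by linarith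
  exact le_antisymm (mono ε ε₀ hp hle hε₀lt) (hmin ε hp hl)
end

section
/- Let ρ : Δ⁺ → ℕ be an abstract rank invariant that is moreover right-continuous in each variable. If p̄ = (ū,v̄) ∈ Δ⁺ is a proper cornerpoint (μ(p̄) > 0), then: (i) for every u with ū ≤ u < v̄, the function v ↦ ρ(u,v) is discontinuous at v̄; (ii) for every v with ū < v < v̄, the function u ↦ ρ(u,v) is discontinuous at ū. If ū ∈ ℝ is a cornerpoint at infinity (μ∞(ū) > 0), then: (iii) for every v > ū, the function u ↦ ρ(u,v) is discontinuous at ū. -/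
open AbstractRankInvariant

/-- **Propagation of Discontinuities.**  Assume `ρ` is an abstract rank invariant
that is right-continuous in each variable.  If `(ū,v̄) ∈ Δ⁺` is a proper
cornerpoint (`μ(ū,v̄) > 0`), then (i) for every `ū ≤ u < v̄` the function
`v ↦ ρ(u,v)` is discontinuous at `v̄`, and (ii) for every `ū < v < v̄` the
function `u ↦ ρ(u,v)` is discontinuous at `ū`.  If `ū` is a cornerpoint at
infinity (`μ∞(ū) > 0`), then (iii) for every `v > ū` the function `u ↦ ρ(u,v)`
is discontinuous at `ū`. -/
theorem propagation_of_discontinuities (R : AbstractRankInvariant)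
    (hrc : R.RightContinuous) (ubar vbar : ℝ) (h : ubar < vbar) :
    (0 < R.mult ubar vbar →
      (∀ u : ℝ, ubar ≤ u → u < vbar → R.DiscontAtV u vbar) ∧
      (∀ v : ℝ, ubar < v → v < vbar → R.DiscontAtU ubar v)) ∧
    (0 < R.multInf ubar → ∀ v : ℝ, ubar < v → R.DiscontAtU ubar v) := by
  constructor
  · intro hm
    -- every admissible ε has E(ε) ≥ 1
    have key : ∀ ε : ℝ, 0 < ε → ubar + ε < vbar - ε → 1 ≤ R.cornerE ubar vbar ε := by
      intro ε hε hlt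
      have hmem : (R.cornerE ubar vbar ε).toNat ∈
          ((fun ε => (R.cornerE ubar vbar ε).toNat) ''
            {ε : ℝ | 0 < ε ∧ ubar + ε < vbar - ε}) :=
        Set.mem_image_of_mem _ ⟨hε, hlt⟩
      have hle := Nat.sInf_le hmem
      have hm' : 0 < sInf ((fun ε => (R.cornerE ubar vbar ε).toNat) ''
          {ε : ℝ | 0 < ε ∧ ubar + ε < vbar - ε}) := hm
      omega
    constructor
    · -- (i)
      intro u hu huv
      rintro ⟨δ, hδ, hc⟩
      set ε₀ : ℝ := min (δ/2) (min ((vbar - u)/2) ((vbar - ubar)/4)) with hε₀def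
      have hε₀pos : 0 < ε₀ := by
        apply lt_min (by linarith) (lt_min (by linarith) (by linarith))
      have hε₀δ : ε₀ < δ := lt_of_le_of_lt (min_le_left _ _) (by linarith)
      have hε₀u : ε₀ ≤ (vbar - u)/2 := le_trans (min_le_right _ _) (min_le_left _ _)
      have hε₀ub : ε₀ ≤ (vbar - ubar)/4 := le_trans (min_le_right _ _) (min_le_right _ _)
      have huv₀ : u < vbar - ε₀ := by linarith
      have hadm₀ : ubar + ε₀ < vbar - ε₀ := by linarith
      -- Step A : ρ(ū, v̄−ε₀) = ρ(ū, v̄+ε₀)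
      have h1 : R.ρ u (vbar - ε₀) = R.ρ u vbar :=
        hc _ huv₀ (abs_lt.mpr ⟨by linarith, by linarith⟩)
      have h2 : R.ρ u (vbar + ε₀) = R.ρ u vbar :=
        hc _ (by linarith) (abs_lt.mpr ⟨by linarith, by linarith⟩)
      have hjA := R.jump hu huv₀ (show vbar - ε₀ ≤ vbar + ε₀ by linarith)
      have hmA := R.mono_v (show ubar < vbar - ε₀ by linarith)
        (show vbar - ε₀ ≤ vbar + ε₀ by linarith)
      have hA : R.ρ ubar (vbar - ε₀) = R.ρ ubar (vbar + ε₀) := by omega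
      -- right continuity in u at (ū, v̄−ε₀)
      obtain ⟨δ', hδ', hrcu⟩ := (hrc ubar (vbar - ε₀) (by linarith)).1
      set ε : ℝ := min ε₀ (δ'/2) with hεdef
      have hεpos : 0 < ε := lt_min hε₀pos (by linarith)
      have hεε₀ : ε ≤ ε₀ := min_le_left _ _
      have hεδ' : ε < δ' := lt_of_le_of_lt (min_le_right _ _) (by linarith)
      have hadm : ubar + ε < vbar - ε := by linarith
      have hE := key ε hεpos hadm
      have ha1 : R.ρ (ubar + ε) (vbar - ε) ≤ R.ρ (ubar + ε) (vbar - ε₀) :=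
        R.mono_v (by linarith) (by linarith)
      have ha2 : R.ρ (ubar + ε) (vbar - ε₀) = R.ρ ubar (vbar - ε₀) :=
        hrcu _ (by linarith) (by linarith) (by linarith)
      have hb : R.ρ (ubar - ε) (vbar + ε) ≤ R.ρ (ubar - ε) (vbar - ε) :=
        R.mono_v (by linarith) (by linarith)
      have hc1 : R.ρ ubar (vbar + ε₀) ≤ R.ρ ubar (vbar + ε) :=
        R.mono_v (by linarith) (by linarith)
      have hc2 : R.ρ ubar (vbar + ε) ≤ R.ρ (ubar + ε) (vbar + ε) :=
        R.mono_u (by linarith) (by linarith)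
      simp only [AbstractRankInvariant.cornerE] at hE
      omega
    · -- (ii)
      intro v hv hvv
      rintro ⟨δ, hδ, hc⟩
      set ε : ℝ := min (δ/2) (min ((v - ubar)/2) (vbar - v)) with hεdef
      have hεpos : 0 < ε := lt_min (by linarith) (lt_min (by linarith) (by linarith))
      have hεδ : ε < δ := lt_of_le_of_lt (min_le_left _ _) (by linarith)
      have hεv : ε ≤ (v - ubar)/2 := le_trans (min_le_right _ _) (min_le_left _ _)
      have hεv' : ε ≤ vbar - v := le_trans (min_le_right _ _) (min_le_right _ _)
      have huv : ubar + ε < v := by linarith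
      have hvv' : v ≤ vbar - ε := by linarith
      have hadm : ubar + ε < vbar - ε := by linarith
      have hE := key ε hεpos hadm
      have h1 : R.ρ (ubar + ε) v = R.ρ ubar v :=
        hc _ huv (abs_lt.mpr ⟨by linarith, by linarith⟩)
      have h2 : R.ρ (ubar - ε) v = R.ρ ubar v :=
        hc _ (by linarith) (abs_lt.mpr ⟨by linarith, by linarith⟩)
      have hj := R.jump (show ubar - ε ≤ ubar + ε by linarith) huv hvv'
      have hmu : R.ρ (ubar - ε) (vbar + ε) ≤ R.ρ (ubar + ε) (vbar + ε) :=
        R.mono_u (by linarith) (by linarith)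
      simp only [AbstractRankInvariant.cornerE] at hE
      omega
  · -- (iii)
    intro hm v hv
    have key : ∀ ε : ℝ, 0 < ε → ubar + ε < 1/ε →
        1 ≤ (R.ρ (ubar + ε) (1/ε) : ℤ) - (R.ρ (ubar - ε) (1/ε) : ℤ) := by
      intro ε hε hlt
      have hmem : ((R.ρ (ubar + ε) (1/ε) : ℤ) - (R.ρ (ubar - ε) (1/ε) : ℤ)).toNat ∈
          ((fun ε => ((R.ρ (ubar + ε) (1 / ε) : ℤ) - (R.ρ (ubar - ε) (1 / ε) : ℤ)).toNat) ''
            {ε : ℝ | 0 < ε ∧ ubar + ε < 1 / ε}) :=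
        Set.mem_image_of_mem _ ⟨hε, hlt⟩
      have hle := Nat.sInf_le hmem
      have hm' : 0 < sInf
          ((fun ε => ((R.ρ (ubar + ε) (1 / ε) : ℤ) - (R.ρ (ubar - ε) (1 / ε) : ℤ)).toNat) ''
            {ε : ℝ | 0 < ε ∧ ubar + ε < 1 / ε}) := hm
      omega
    rintro ⟨δ, hδ, hc⟩
    have hM : (0:ℝ) < max v 1 := lt_of_lt_of_le one_pos (le_max_right _ _)
    set ε : ℝ := min (δ/2) (min ((v - ubar)/2) (1 / max v 1)) with hεdef
    have hεpos : 0 < ε := lt_min (by linarith) (lt_min (by linarith) (by positivity))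
    have hεδ : ε < δ := lt_of_le_of_lt (min_le_left _ _) (by linarith)
    have hεv : ε ≤ (v - ubar)/2 := le_trans (min_le_right _ _) (min_le_left _ _)
    have hεM : ε ≤ 1 / max v 1 := le_trans (min_le_right _ _) (min_le_right _ _)
    have hvle : v ≤ 1/ε := by
      have h1 : ε * max v 1 ≤ 1 := by
        have := (le_div_iff₀ hM).mp hεM
        linarith
      have h2 : max v 1 ≤ 1/ε := by
        rw [le_div_iff₀ hεpos]
        nlinarith
      exact le_trans (le_max_left _ _) h2
    have huv : ubar + ε < v := by linarith
    have hE := key ε hεpos (lt_of_lt_of_le huv hvle)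
    have h1 : R.ρ (ubar + ε) v = R.ρ ubar v :=
      hc _ huv (abs_lt.mpr ⟨by linarith, by linarith⟩)
    have h2 : R.ρ (ubar - ε) v = R.ρ ubar v :=
      hc _ (by linarith) (abs_lt.mpr ⟨by linarith, by linarith⟩)
    have hj := R.jump (show ubar - ε ≤ ubar + ε by linarith) huv hvle
    omega
end

section
/- Let ρ : Δ⁺ → ℕ be an abstract rank invariant. Then discontinuities in the first variable propagate downwards and discontinuities in the second variable propagate rightwards. Precisely: (a) if (ū,v̄) ∈ Δ⁺ and the function u ↦ ρ(u,v̄) is discontinuous at ū, then for every v with ū < v ≤ v̄ the function u ↦ ρ(u,v) is discontinuous at ū; (b) if (ū,v̄) ∈ Δ⁺ and the function v ↦ ρ(ū,v) is discontinuous at v̄, then for every u with ū ≤ u < v̄ the function v ↦ ρ(u,v) is discontinuous at v̄. -/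
open AbstractRankInvariant

/-- **Discontinuities propagate downwards and rightwards.**
(a) If `u ↦ ρ(u,v̄)` is discontinuous at `ū` (with `ū < v̄`), then for every `v`
with `ū < v ≤ v̄` the function `u ↦ ρ(u,v)` is discontinuous at `ū`.
(b) If `v ↦ ρ(ū,v)` is discontinuous at `v̄` (with `ū < v̄`), then for every `u`
with `ū ≤ u < v̄` the function `v ↦ ρ(u,v)` is discontinuous at `v̄`. -/
theorem discontinuities_propagate (R : AbstractRankInvariant) :
    (∀ ubar vbar : ℝ, ubar < vbar → R.DiscontAtU ubar vbar →
      ∀ v : ℝ, ubar < v → v ≤ vbar → R.DiscontAtU ubar v) ∧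
    (∀ ubar vbar : ℝ, ubar < vbar → R.DiscontAtV ubar vbar →
      ∀ u : ℝ, ubar ≤ u → u < vbar → R.DiscontAtV u vbar) := by
  constructor
  · intro ubar vbar hlt hd v huv hvv
    intro ⟨δ, hδ, hcont⟩
    refine hd ⟨min δ (v - ubar), lt_min hδ (by linarith), ?_⟩
    intro u' hu'v habs
    have h1 : |u' - ubar| < δ := lt_of_lt_of_le habs (min_le_left _ _)
    have h2 : u' < v := by
      have := lt_of_lt_of_le habs (min_le_right _ _)
      have := le_abs_self (u' - ubar)
      linarith
    have heq : R.ρ u' v = R.ρ ubar v := hcont u' h2 h1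
    rcases le_total u' ubar with h | h
    · have hm : R.ρ u' vbar ≤ R.ρ ubar vbar := R.mono_u h hlt
      have hj := R.jump h huv hvv
      omega
    · have hm : R.ρ ubar vbar ≤ R.ρ u' vbar := R.mono_u h (by linarith)
      have hj := R.jump h h2 hvv
      omega
  · intro ubar vbar hlt hd u huu huv
    intro ⟨δ, hδ, hcont⟩
    refine hd ⟨min δ (vbar - u), lt_min hδ (by linarith), ?_⟩
    intro v' hv' habs
    have h1 : |v' - vbar| < δ := lt_of_lt_of_le habs (min_le_left _ _)
    have h2 : u < v' := by
      have := lt_of_lt_of_le habs (min_le_right _ _)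
      have := neg_abs_le (v' - vbar)
      linarith
    have heq : R.ρ u v' = R.ρ u vbar := hcont v' h2 h1
    rcases le_total v' vbar with h | h
    · have hm : R.ρ ubar vbar ≤ R.ρ ubar v' := R.mono_v (by linarith) h
      have hj := R.jump huu h2 h
      omega
    · have hm : R.ρ ubar v' ≤ R.ρ ubar vbar := R.mono_v hlt h
      have hj := R.jump huu huv h
      omega
end

section
/- Let ρ : Δ⁺ → ℕ be an abstract rank invariant. Then for every point p̄ = (ū,v̄) ∈ Δ⁺ there exists a real number ε > 0 such that the open set W_ε(p̄) = {(u,v) ∈ ℝ² : |u−ū| < ε, |v−v̄| < ε, u ≠ ū, v ≠ v̄} is contained in Δ⁺ and ρ is continuous at every point of W_ε(p̄). -/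
open AbstractRankInvariant


private lemma mono_const_right (f : ℝ → ℕ) (c L : ℝ) (hL : 0 < L)
    (mono : ∀ ⦃x y : ℝ⦄, c < x → x ≤ y → y ≤ c + L → f x ≤ f y) :
    ∃ ε, 0 < ε ∧ ε ≤ L ∧ ∀ x, c < x → x ≤ c + ε → f x = f (c + ε) := by
  have hne : (f '' Set.Ioc c (c + L)).Nonempty :=
    ⟨f (c + L), ⟨c + L, ⟨by linarith, le_refl _⟩, rfl⟩⟩
  obtain ⟨x, hx, hfx⟩ := Nat.sInf_mem hne
  refine ⟨x - c, by linarith [hx.1], by linarith [hx.2], fun z hz hze => ?_⟩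
  have hxc : c + (x - c) = x := by ring
  rw [hxc] at hze ⊢
  have h1 : f z ≤ f x := mono hz hze hx.2
  have h2 : f x ≤ f z := by
    rw [hfx]
    exact Nat.sInf_le ⟨z, ⟨hz, by linarith [hx.2]⟩, rfl⟩
  omega

private lemma anti_const_right (f : ℝ → ℕ) (c L : ℝ) (hL : 0 < L) (B : ℕ)
    (hB : ∀ x, c < x → x ≤ c + L → f x ≤ B)
    (anti : ∀ ⦃x y : ℝ⦄, c < x → x ≤ y → y ≤ c + L → f y ≤ f x) :
    ∃ ε, 0 < ε ∧ ε ≤ L ∧ ∀ x, c < x → x ≤ c + ε → f x = f (c + ε) := by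
  obtain ⟨ε, h1, h2, h3⟩ := mono_const_right (fun x => B - f x) c L hL
    (fun x y hx hxy hy => Nat.sub_le_sub_left (anti hx hxy hy) B)
  refine ⟨ε, h1, h2, fun x hx hxe => ?_⟩
  have h4 : B - f x = B - f (c + ε) := h3 x hx hxe
  have h5 := hB x hx (by linarith)
  have h6 := hB (c + ε) (by linarith) (by linarith)
  omega

/-- **Local constancy off a cross.**  For every `(ū,v̄) ∈ Δ⁺` there is `ε > 0`
such that the open set `W_ε = {(u,v) : |u−ū| < ε, |v−v̄| < ε, u ≠ ū, v ≠ v̄}` is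
contained in `Δ⁺` and `ρ` is continuous at every point of `W_ε` (continuity of
the `ℕ`-valued `ρ` on `Δ⁺` being local constancy). -/
theorem no_discontinuities_off_cross (R : AbstractRankInvariant)
    (ubar vbar : ℝ) (h : ubar < vbar) :
    ∃ ε > 0,
      (∀ u v : ℝ, |u - ubar| < ε → |v - vbar| < ε → u ≠ ubar → v ≠ vbar → u < v) ∧
      (∀ u v : ℝ, |u - ubar| < ε → |v - vbar| < ε → u ≠ ubar → v ≠ vbar →
        ∃ δ > 0, ∀ u' v' : ℝ, u' < v' → |u' - u| < δ → |v' - v| < δ →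
          R.ρ u' v' = R.ρ u v) := by
  set a : ℝ := (vbar - ubar) / 4 with ha_def
  have ha : 0 < a := by simp only [ha_def]; linarith
  have hav : ubar + a < vbar - a := by simp only [ha_def]; linarith
  -- right of ubar at level vbar - a
  obtain ⟨ε₁, hε₁, hε₁a, hc₁⟩ := mono_const_right (fun u => R.ρ u (vbar - a)) ubar a ha
    (fun x y hx hxy hy => R.mono_u hxy (by linarith))
  -- left of ubar at level vbar - a (reflected)
  obtain ⟨ε₂, hε₂, hε₂a, hc₂⟩ := anti_const_right (fun t => R.ρ (2 * ubar - t) (vbar - a))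
    ubar a ha (R.ρ ubar (vbar - a))
    (fun x hx hxa => R.mono_u (by linarith) (by linarith))
    (fun x y hx hxy hy => R.mono_u (by linarith) (by linarith))
  -- right of vbar at slice ubar + a
  obtain ⟨ε₃, hε₃, hε₃a, hc₃⟩ := anti_const_right (fun v => R.ρ (ubar + a) v) vbar a ha
    (R.ρ (ubar + a) vbar)
    (fun x hx hxa => R.mono_v (by linarith) (by linarith))
    (fun x y hx hxy hy => R.mono_v (by linarith) hxy)
  -- left of vbar at slice ubar + a (reflected)
  obtain ⟨ε₄, hε₄, hε₄a, hc₄⟩ := mono_const_right (fun t => R.ρ (ubar + a) (2 * vbar - t))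
    vbar a ha
    (fun x y hx hxy hy => R.mono_v (by linarith) (by linarith))
  set ε : ℝ := min (min ε₁ ε₂) (min ε₃ ε₄) with hε_def
  have hεpos : 0 < ε := lt_min (lt_min hε₁ hε₂) (lt_min hε₃ hε₄)
  have hεε₁ : ε ≤ ε₁ := le_trans (min_le_left _ _) (min_le_left _ _)
  have hεε₂ : ε ≤ ε₂ := le_trans (min_le_left _ _) (min_le_right _ _)
  have hεε₃ : ε ≤ ε₃ := le_trans (min_le_right _ _) (min_le_left _ _)
  have hεε₄ : ε ≤ ε₄ := le_trans (min_le_right _ _) (min_le_right _ _)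
  have hεa : ε ≤ a := le_trans hεε₁ hε₁a
  -- constancy in u on the right of ubar, at any level v ≥ vbar - a
  have hUr : ∀ v u₁ u₂, vbar - a ≤ v → ubar < u₁ → u₁ ≤ ubar + ε₁ →
      ubar < u₂ → u₂ ≤ ubar + ε₁ → R.ρ u₁ v = R.ρ u₂ v := by
    have key : ∀ v u₁ u₂, vbar - a ≤ v → ubar < u₁ → u₁ ≤ ubar + ε₁ →
        ubar < u₂ → u₂ ≤ ubar + ε₁ → u₁ ≤ u₂ → R.ρ u₁ v = R.ρ u₂ v := by
      intro v u₁ u₂ hv h1 h1' h2 h2' h12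
      have hlt : u₂ < v := by linarith
      have hle : R.ρ u₁ v ≤ R.ρ u₂ v := R.mono_u h12 hlt
      have hj := R.jump h12 (show u₂ < vbar - a by linarith) hv
      have e1 : R.ρ u₁ (vbar - a) = R.ρ (ubar + ε₁) (vbar - a) := hc₁ u₁ h1 h1'
      have e2 : R.ρ u₂ (vbar - a) = R.ρ (ubar + ε₁) (vbar - a) := hc₁ u₂ h2 h2'
      omega
    intro v u₁ u₂ hv h1 h1' h2 h2'
    rcases le_total u₁ u₂ with h | h
    · exact key v u₁ u₂ hv h1 h1' h2 h2' h
    · exact (key v u₂ u₁ hv h2 h2' h1 h1' h).symm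
  -- constancy in u on the left of ubar
  have hcl : ∀ u, ubar - ε₂ ≤ u → u < ubar →
      R.ρ u (vbar - a) = R.ρ (2 * ubar - (ubar + ε₂)) (vbar - a) := by
    intro u h1 h2
    have := hc₂ (2 * ubar - u) (by linarith) (by linarith)
    simpa using this
  have hUl : ∀ v u₁ u₂, vbar - a ≤ v → ubar - ε₂ ≤ u₁ → u₁ < ubar →
      ubar - ε₂ ≤ u₂ → u₂ < ubar → R.ρ u₁ v = R.ρ u₂ v := by
    have key : ∀ v u₁ u₂, vbar - a ≤ v → ubar - ε₂ ≤ u₁ → u₁ < ubar →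
        ubar - ε₂ ≤ u₂ → u₂ < ubar → u₁ ≤ u₂ → R.ρ u₁ v = R.ρ u₂ v := by
      intro v u₁ u₂ hv h1 h1' h2 h2' h12
      have hle : R.ρ u₁ v ≤ R.ρ u₂ v := R.mono_u h12 (by linarith)
      have hj := R.jump h12 (show u₂ < vbar - a by linarith) hv
      have e1 := hcl u₁ h1 h1'
      have e2 := hcl u₂ h2 h2'
      omega
    intro v u₁ u₂ hv h1 h1' h2 h2'
    rcases le_total u₁ u₂ with h | h
    · exact key v u₁ u₂ hv h1 h1' h2 h2' h
    · exact (key v u₂ u₁ hv h2 h2' h1 h1' h).symm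
  -- constancy in v on the right of vbar, at any slice u ≤ ubar + a
  have hVr : ∀ u v₁ v₂, u ≤ ubar + a → vbar < v₁ → v₁ ≤ vbar + ε₃ →
      vbar < v₂ → v₂ ≤ vbar + ε₃ → R.ρ u v₁ = R.ρ u v₂ := by
    have key : ∀ u v₁ v₂, u ≤ ubar + a → vbar < v₁ → v₁ ≤ vbar + ε₃ →
        vbar < v₂ → v₂ ≤ vbar + ε₃ → v₁ ≤ v₂ → R.ρ u v₁ = R.ρ u v₂ := by
      intro u v₁ v₂ hu h1 h1' h2 h2' h12
      have hle : R.ρ u v₂ ≤ R.ρ u v₁ := R.mono_v (by linarith) h12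
      have hj := R.jump hu (show ubar + a < v₁ by linarith) h12
      have e1 : R.ρ (ubar + a) v₁ = R.ρ (ubar + a) (vbar + ε₃) := hc₃ v₁ h1 h1'
      have e2 : R.ρ (ubar + a) v₂ = R.ρ (ubar + a) (vbar + ε₃) := hc₃ v₂ h2 h2'
      omega
    intro u v₁ v₂ hu h1 h1' h2 h2'
    rcases le_total v₁ v₂ with h | h
    · exact key u v₁ v₂ hu h1 h1' h2 h2' h
    · exact (key u v₂ v₁ hu h2 h2' h1 h1' h).symm
  -- constancy in v on the left of vbar
  have hcl' : ∀ v, vbar - ε₄ ≤ v → v < vbar →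
      R.ρ (ubar + a) v = R.ρ (ubar + a) (2 * vbar - (vbar + ε₄)) := by
    intro v h1 h2
    have := hc₄ (2 * vbar - v) (by linarith) (by linarith)
    simpa using this
  have hVl : ∀ u v₁ v₂, u ≤ ubar + a → vbar - ε₄ ≤ v₁ → v₁ < vbar →
      vbar - ε₄ ≤ v₂ → v₂ < vbar → R.ρ u v₁ = R.ρ u v₂ := by
    have key : ∀ u v₁ v₂, u ≤ ubar + a → vbar - ε₄ ≤ v₁ → v₁ < vbar →
        vbar - ε₄ ≤ v₂ → v₂ < vbar → v₁ ≤ v₂ → R.ρ u v₁ = R.ρ u v₂ := by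
      intro u v₁ v₂ hu h1 h1' h2 h2' h12
      have hεa4 : ε₄ ≤ a := hε₄a
      have hle : R.ρ u v₂ ≤ R.ρ u v₁ := R.mono_v (by linarith) h12
      have hj := R.jump hu (show ubar + a < v₁ by linarith) h12
      have e1 := hcl' v₁ h1 h1'
      have e2 := hcl' v₂ h2 h2'
      omega
    intro u v₁ v₂ hu h1 h1' h2 h2'
    rcases le_total v₁ v₂ with h | h
    · exact key u v₁ v₂ hu h1 h1' h2 h2' h
    · exact (key u v₂ v₁ hu h2 h2' h1 h1' h).symm
  refine ⟨ε, hεpos, ?_, ?_⟩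
  · intro u v hu hv _ _
    have hu' := abs_lt.mp hu
    have hv' := abs_lt.mp hv
    linarith [hu'.1, hu'.2, hv'.1, hv'.2]
  · intro u v hu hv hune hvne
    have hu' := abs_lt.mp hu
    have hv' := abs_lt.mp hv
    have hdu0 : 0 < |u - ubar| := abs_pos.mpr (sub_ne_zero.mpr hune)
    have hdv0 : 0 < |v - vbar| := abs_pos.mpr (sub_ne_zero.mpr hvne)
    refine ⟨min (min |u - ubar| (ε - |u - ubar|)) (min |v - vbar| (ε - |v - vbar|)),
      lt_min (lt_min hdu0 (by linarith)) (lt_min hdv0 (by linarith)), ?_⟩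
    intro u' v' huv' hu'd hv'd
    have hd1 : |u' - u| < |u - ubar| :=
      lt_of_lt_of_le hu'd (le_trans (min_le_left _ _) (min_le_left _ _))
    have hd2 : |u' - u| < ε - |u - ubar| :=
      lt_of_lt_of_le hu'd (le_trans (min_le_left _ _) (min_le_right _ _))
    have hd3 : |v' - v| < |v - vbar| :=
      lt_of_lt_of_le hv'd (le_trans (min_le_right _ _) (min_le_left _ _))
    have hd4 : |v' - v| < ε - |v - vbar| :=
      lt_of_lt_of_le hv'd (le_trans (min_le_right _ _) (min_le_right _ _))
    have hu'ε : |u' - ubar| < ε := by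
      calc |u' - ubar| ≤ |u' - u| + |u - ubar| := abs_sub_le u' u ubar
        _ < ε := by linarith
    have hv'ε : |v' - vbar| < ε := by
      calc |v' - vbar| ≤ |v' - v| + |v - vbar| := abs_sub_le v' v vbar
        _ < ε := by linarith
    have hu'ε' := abs_lt.mp hu'ε
    have hv'ε' := abs_lt.mp hv'ε
    have hd1' := abs_lt.mp hd1
    have hd3' := abs_lt.mp hd3
    -- step 1: change u' to u at level v'
    have step1 : R.ρ u' v' = R.ρ u v' := by
      have hv'a : vbar - a ≤ v' := by linarith [hv'ε'.1]
      rcases lt_or_gt_of_ne hune with hlt | hgt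
      · -- u < ubar, hence u' < ubar
        have hdue : |u - ubar| = -(u - ubar) := abs_of_neg (by linarith)
        have hu'lt : u' < ubar := by
          have := hd1'.2; rw [hdue] at this; linarith
        have hult : u < ubar := hlt
        exact hUl v' u' u hv'a (by linarith [hu'ε'.1]) hu'lt
          (by linarith [hu'.1]) hult
      · -- u > ubar, hence u' > ubar
        have hdue : |u - ubar| = u - ubar := abs_of_pos (by linarith)
        have hu'gt : ubar < u' := by
          have := hd1'.1; rw [hdue] at this; linarith
        exact hUr v' u' u hv'a hu'gt (by linarith [hu'ε'.2]) hgt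
          (by linarith [hu'.2])
    -- step 2: change v' to v at slice u
    have step2 : R.ρ u v' = R.ρ u v := by
      have hua : u ≤ ubar + a := by linarith [hu'.2]
      rcases lt_or_gt_of_ne hvne with hlt | hgt
      · have hdve : |v - vbar| = -(v - vbar) := abs_of_neg (by linarith)
        have hv'lt : v' < vbar := by
          have := hd3'.2; rw [hdve] at this; linarith
        exact hVl u v' v hua (by linarith [hv'ε'.1]) hv'lt
          (by linarith [hv'.1]) hlt
      · have hdve : |v - vbar| = v - vbar := abs_of_pos (by linarith)
        have hv'gt : vbar < v' := by
          have := hd3'.1; rw [hdve] at this; linarith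
        exact hVr u v' v hua hv'gt (by linarith [hv'ε'.2]) hgt
          (by linarith [hv'.2])
    rw [step1, step2]
end

section
/- Let ρ : Δ⁺ → ℕ be an abstract rank invariant and suppose there are real numbers m ≤ M₀ such that ρ(u,v) = 0 whenever u < m (and u < v), and ρ(u,v) = ρ(u,v') whenever v, v' ≥ M₀ (with u < v and u < v'). Then every proper cornerpoint (ū,v̄) of ρ satisfies m ≤ ū < v̄ ≤ M₀; that is, all proper cornerpoints belong to the set {(u,v) ∈ Δ⁺ : m ≤ u < v ≤ M₀}. -/
open AbstractRankInvariant

/-- **Localization of Cornerpoints.**  Suppose `ρ(u,v) = 0` whenever `u < m`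
(and `u < v`), and `ρ(u,v) = ρ(u,v')` whenever `v, v' ≥ M₀` (with `u < v`,
`u < v'`).  Then every proper cornerpoint `(ū,v̄)` of `ρ` satisfies
`m ≤ ū < v̄ ≤ M₀`. -/
theorem localization_of_cornerpoints (R : AbstractRankInvariant) (m M₀ : ℝ)
    (hmM : m ≤ M₀)
    (h0 : ∀ u v : ℝ, u < m → u < v → R.ρ u v = 0)
    (hM : ∀ u v v' : ℝ, u < v → u < v' → M₀ ≤ v → M₀ ≤ v' → R.ρ u v = R.ρ u v')
    (ubar vbar : ℝ) (h : ubar < vbar) (hcorner : 0 < R.mult ubar vbar) :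
    m ≤ ubar ∧ vbar ≤ M₀ := by
  have key : ∀ ε : ℝ, 0 < ε → ubar + ε < vbar - ε →
      0 < (R.cornerE ubar vbar ε).toNat := by
    intro ε hε0 hε1
    have hle : R.mult ubar vbar ≤ (R.cornerE ubar vbar ε).toNat :=
      Nat.sInf_le ⟨ε, ⟨hε0, hε1⟩, rfl⟩
    omega
  constructor
  · by_contra hm
    push_neg at hm
    set ε := min ((m - ubar) / 2) ((vbar - ubar) / 4) with hεdef
    have hεa : ε ≤ (m - ubar) / 2 := min_le_left _ _
    have hεb : ε ≤ (vbar - ubar) / 4 := min_le_right _ _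
    have hε0 : 0 < ε := lt_min (by linarith) (by linarith)
    have hε1 : ubar + ε < vbar - ε := by linarith
    have hE : R.cornerE ubar vbar ε = 0 := by
      unfold AbstractRankInvariant.cornerE
      rw [h0 _ _ (by linarith) hε1, h0 _ _ (by linarith) (by linarith),
        h0 _ _ (by linarith) (by linarith), h0 _ _ (by linarith) (by linarith)]
      ring
    have := key ε hε0 hε1
    rw [hE] at this
    simp at this
  · by_contra hv
    push_neg at hv
    set ε := min ((vbar - M₀) / 2) ((vbar - ubar) / 4) with hεdef
    have hεa : ε ≤ (vbar - M₀) / 2 := min_le_left _ _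
    have hεb : ε ≤ (vbar - ubar) / 4 := min_le_right _ _
    have hε0 : 0 < ε := lt_min (by linarith) (by linarith)
    have hε1 : ubar + ε < vbar - ε := by linarith
    have hE : R.cornerE ubar vbar ε = 0 := by
      unfold AbstractRankInvariant.cornerE
      rw [hM (ubar + ε) (vbar - ε) (vbar + ε) hε1 (by linarith) (by linarith)
        (by linarith),
        hM (ubar - ε) (vbar - ε) (vbar + ε) (by linarith) (by linarith)
        (by linarith) (by linarith)]
      ring
    have := key ε hε0 hε1
    rw [hE] at this
    simp at this
end

section
/- Let ρ : Δ⁺ → ℕ be an abstract rank invariant and suppose there are real numbers m ≤ M₀ such that ρ(u,v) = 0 whenever u < m (and u < v), and ρ(u,v) = ρ(u,v') whenever v, v' ≥ M₀ (with u < v and u < v'). Then for every strictly positive real number ε, the set of proper cornerpoints of ρ contained in {(u,v) ∈ ℝ² : u + ε < v} is finite. -/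
open AbstractRankInvariant

/-- Rectangle quantity. -/
def Fq (R : AbstractRankInvariant) (a b c d : ℝ) : ℤ :=
  (R.ρ b c : ℤ) - R.ρ a c - R.ρ b d + R.ρ a d

lemma Fq_nonneg (R : AbstractRankInvariant) {a b c d : ℝ}
    (hab : a ≤ b) (hbc : b < c) (hcd : c ≤ d) : 0 ≤ Fq R a b c d := by
  have := R.jump hab hbc hcd
  unfold Fq; omega

lemma Fq_add_u (R : AbstractRankInvariant) (a b c p q : ℝ) :
    Fq R a c p q = Fq R a b p q + Fq R b c p q := by unfold Fq; ring

lemma Fq_add_v (R : AbstractRankInvariant) (a b p q r : ℝ) :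
    Fq R a b p r = Fq R a b p q + Fq R a b q r := by unfold Fq; ring

lemma cornerE_eq_Fq (R : AbstractRankInvariant) (u v ε : ℝ) :
    R.cornerE u v ε = Fq R (u - ε) (u + ε) (v - ε) (v + ε) := by
  unfold Fq AbstractRankInvariant.cornerE; ring

lemma mult_le_toNat (R : AbstractRankInvariant) {u v ε : ℝ}
    (h1 : 0 < ε) (h2 : u + ε < v - ε) :
    R.mult u v ≤ (R.cornerE u v ε).toNat :=
  Nat.sInf_le ⟨ε, ⟨h1, h2⟩, rfl⟩

lemma one_le_Fq (R : AbstractRankInvariant) {u' u'' v'' v' ub vb : ℝ}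
    (h2 : u'' < v'') (hm1 : u' < ub) (hm2 : ub < u'') (hm3 : v'' < vb) (hm4 : vb < v')
    (hmult : 0 < R.mult ub vb) : 1 ≤ Fq R u' u'' v'' v' := by
  have hub : ub < vb := by linarith
  set X := min (min (ub - u') (u'' - ub)) (min (min (vb - v'') (v' - vb)) ((vb - ub)/2)) with hX
  set ε := X / 2 with hε
  have A1 : X ≤ ub - u' := le_trans (min_le_left _ _) (min_le_left _ _)
  have A2 : X ≤ u'' - ub := le_trans (min_le_left _ _) (min_le_right _ _)
  have A3 : X ≤ vb - v'' := le_trans (min_le_right _ _) (le_trans (min_le_left _ _) (min_le_left _ _))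
  have A4 : X ≤ v' - vb := le_trans (min_le_right _ _) (le_trans (min_le_left _ _) (min_le_right _ _))
  have A5 : X ≤ (vb - ub)/2 := le_trans (min_le_right _ _) (min_le_right _ _)
  have hXpos : 0 < X := by
    apply lt_min (lt_min (by linarith) (by linarith))
    exact lt_min (lt_min (by linarith) (by linarith)) (by linarith)
  have hεpos : 0 < ε := by rw [hε]; linarith
  have h2ε : 2 * ε = X := by rw [hε]; ring
  have hadm : ub + ε < vb - ε := by linarith
  have hE0 : 0 ≤ R.cornerE ub vb ε := by
    rw [cornerE_eq_Fq]
    exact Fq_nonneg R (by linarith) (by linarith) (by linarith)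
  have hmle := mult_le_toNat R hεpos hadm
  have hE1 : 1 ≤ R.cornerE ub vb ε := by omega
  have d1 : Fq R u' u'' v'' v' =
      Fq R u' (ub - ε) v'' v' + Fq R (ub - ε) (ub + ε) v'' v' + Fq R (ub + ε) u'' v'' v' := by
    rw [Fq_add_u R u' (ub - ε) u'' v'' v', Fq_add_u R (ub - ε) (ub + ε) u'' v'' v']; ring
  have d2 : Fq R (ub - ε) (ub + ε) v'' v' =
      Fq R (ub - ε) (ub + ε) v'' (vb - ε) + R.cornerE ub vb ε
        + Fq R (ub - ε) (ub + ε) (vb + ε) v' := by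
    rw [cornerE_eq_Fq, Fq_add_v R (ub - ε) (ub + ε) v'' (vb - ε) v',
      Fq_add_v R (ub - ε) (ub + ε) (vb - ε) (vb + ε) v']; ring
  have n1 : 0 ≤ Fq R u' (ub - ε) v'' v' := Fq_nonneg R (by linarith) (by linarith) (by linarith)
  have n2 : 0 ≤ Fq R (ub + ε) u'' v'' v' := Fq_nonneg R (by linarith) h2 (by linarith)
  have n3 : 0 ≤ Fq R (ub - ε) (ub + ε) v'' (vb - ε) :=
    Fq_nonneg R (by linarith) (by linarith) (by linarith)
  have n4 : 0 ≤ Fq R (ub - ε) (ub + ε) (vb + ε) v' :=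
    Fq_nonneg R (by linarith) (by linarith) (by linarith)
  linarith

lemma count_le (R : AbstractRankInvariant) :
    ∀ n : ℕ, ∀ (t : Finset (ℝ × ℝ)) (u' u'' v'' v' : ℝ),
      t.card = n → u' ≤ u'' → u'' < v'' → v'' ≤ v' →
      (∀ p ∈ t, u' < p.1 ∧ p.1 < u'' ∧ v'' < p.2 ∧ p.2 < v') →
      (∀ p ∈ t, 0 < R.mult p.1 p.2) →
      (t.card : ℤ) ≤ Fq R u' u'' v'' v' := by
  intro n
  induction n using Nat.strong_induction_on with
  | _ n ih =>
    intro t u' u'' v'' v' hcard h1 h2 h3 hmem hmult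
    classical
    by_cases hc0 : t.card = 0
    · rw [hc0]; exact_mod_cast Fq_nonneg R h1 h2 h3
    by_cases hc1 : t.card = 1
    · obtain ⟨p, hp⟩ := Finset.card_eq_one.mp hc1
      have hpmem : p ∈ t := by rw [hp]; exact Finset.mem_singleton_self p
      obtain ⟨m1, m2, m3, m4⟩ := hmem p hpmem
      rw [hc1]
      exact_mod_cast one_le_Fq R h2 m1 m2 m3 m4 (hmult p hpmem)
    have hge : 1 < t.card := by omega
    obtain ⟨p, hp, q, hq, hpq⟩ := Finset.one_lt_card.mp hge
    by_cases hsplit : 2 ≤ (t.image Prod.fst).card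
    · -- split in the u direction
      set s := t.image Prod.fst with hs
      have hs0 : s.Nonempty := Finset.card_pos.mp (by omega)
      set x₁ := s.min' hs0 with hx₁
      have hx₁s : x₁ ∈ s := s.min'_mem hs0
      have hs' : (s.erase x₁).Nonempty := by
        rw [← Finset.card_pos, Finset.card_erase_of_mem hx₁s]; omega
      set x₂ := (s.erase x₁).min' hs' with hx₂def
      have hx₂e : x₂ ∈ s.erase x₁ := Finset.min'_mem _ _
      have hx₂s : x₂ ∈ s := Finset.mem_of_mem_erase hx₂e
      have hx₁x₂ : x₁ < x₂ :=
        lt_of_le_of_ne (s.min'_le x₂ hx₂s) (Ne.symm (Finset.ne_of_mem_erase hx₂e))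
      set c := (x₁ + x₂) / 2 with hc
      have hc1 : x₁ < c := by rw [hc]; linarith
      have hc2 : c < x₂ := by rw [hc]; linarith
      have key : ∀ r ∈ t, r.1 < c ∨ c < r.1 := by
        intro r hr
        have hrs : r.1 ∈ s := Finset.mem_image_of_mem _ hr
        by_cases h : r.1 = x₁
        · left; rw [h]; exact hc1
        · right
          have : x₂ ≤ r.1 := Finset.min'_le _ _ (Finset.mem_erase.mpr ⟨h, hrs⟩)
          linarith
      obtain ⟨r₁, hr₁t, hr₁⟩ := Finset.mem_image.mp hx₁s
      obtain ⟨r₂, hr₂t, hr₂⟩ := Finset.mem_image.mp hx₂s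
      have hu'c : u' < c := by have := (hmem r₁ hr₁t).1; rw [hr₁] at this; linarith
      have hcu'' : c < u'' := by have := (hmem r₂ hr₂t).2.1; rw [hr₂] at this; linarith
      set t₁ := t.filter (fun r => r.1 < c) with ht₁
      set t₂ := t.filter (fun r => ¬ r.1 < c) with ht₂
      have hcards : t₁.card + t₂.card = t.card :=
        Finset.card_filter_add_card_filter_not _
      have hr₁m : r₁ ∈ t₁ := Finset.mem_filter.mpr ⟨hr₁t, by rw [hr₁]; exact hc1⟩
      have hr₂m : r₂ ∈ t₂ := Finset.mem_filter.mpr ⟨hr₂t, by rw [hr₂]; exact not_lt.mpr hc2.le⟩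
      have hlt₁ : t₁.card < n := by
        have : 0 < t₂.card := Finset.card_pos.mpr ⟨r₂, hr₂m⟩; omega
      have hlt₂ : t₂.card < n := by
        have : 0 < t₁.card := Finset.card_pos.mpr ⟨r₁, hr₁m⟩; omega
      have ihl := ih t₁.card hlt₁ t₁ u' c v'' v' rfl hu'c.le (by linarith) h3
        (fun r hr => by
          have hrm := Finset.mem_filter.mp hr
          obtain ⟨a1, a2, a3, a4⟩ := hmem r hrm.1
          exact ⟨a1, hrm.2, a3, a4⟩)
        (fun r hr => hmult r (Finset.mem_filter.mp hr).1)
      have ihr := ih t₂.card hlt₂ t₂ c u'' v'' v' rfl hcu''.le h2 h3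
        (fun r hr => by
          have hrm := Finset.mem_filter.mp hr
          obtain ⟨a1, a2, a3, a4⟩ := hmem r hrm.1
          have := (key r hrm.1).resolve_left hrm.2
          exact ⟨this, a2, a3, a4⟩)
        (fun r hr => hmult r (Finset.mem_filter.mp hr).1)
      have hadd := Fq_add_u R u' c u'' v'' v'
      have : (t.card : ℤ) = (t₁.card : ℤ) + t₂.card := by exact_mod_cast (hcards).symm
      linarith
    · -- split in the v direction
      have hp1 : p.1 ∈ t.image Prod.fst := Finset.mem_image_of_mem _ hp
      have hq1 : q.1 ∈ t.image Prod.fst := Finset.mem_image_of_mem _ hq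
      have hfst : p.1 = q.1 := by
        by_contra hne
        exact hsplit (Finset.one_lt_card.mpr ⟨p.1, hp1, q.1, hq1, hne⟩)
      have hsnd2 : p.2 ≠ q.2 := fun h => hpq (Prod.ext hfst h)
      have hsplit' : 2 ≤ (t.image Prod.snd).card :=
        Finset.one_lt_card.mpr ⟨p.2, Finset.mem_image_of_mem _ hp, q.2,
          Finset.mem_image_of_mem _ hq, hsnd2⟩
      set s := t.image Prod.snd with hs
      have hs0 : s.Nonempty := Finset.card_pos.mp (by omega)
      set y₁ := s.min' hs0 with hy₁
      have hy₁s : y₁ ∈ s := s.min'_mem hs0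
      have hs' : (s.erase y₁).Nonempty := by
        rw [← Finset.card_pos, Finset.card_erase_of_mem hy₁s]; omega
      set y₂ := (s.erase y₁).min' hs' with hy₂def
      have hy₂e : y₂ ∈ s.erase y₁ := Finset.min'_mem _ _
      have hy₂s : y₂ ∈ s := Finset.mem_of_mem_erase hy₂e
      have hy₁y₂ : y₁ < y₂ :=
        lt_of_le_of_ne (s.min'_le y₂ hy₂s) (Ne.symm (Finset.ne_of_mem_erase hy₂e))
      set c := (y₁ + y₂) / 2 with hc
      have hc1 : y₁ < c := by rw [hc]; linarith
      have hc2 : c < y₂ := by rw [hc]; linarith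
      have key : ∀ r ∈ t, r.2 < c ∨ c < r.2 := by
        intro r hr
        have hrs : r.2 ∈ s := Finset.mem_image_of_mem _ hr
        by_cases h : r.2 = y₁
        · left; rw [h]; exact hc1
        · right
          have : y₂ ≤ r.2 := Finset.min'_le _ _ (Finset.mem_erase.mpr ⟨h, hrs⟩)
          linarith
      obtain ⟨r₁, hr₁t, hr₁⟩ := Finset.mem_image.mp hy₁s
      obtain ⟨r₂, hr₂t, hr₂⟩ := Finset.mem_image.mp hy₂s
      have hv''c : v'' < c := by have := (hmem r₁ hr₁t).2.2.1; rw [hr₁] at this; linarith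
      have hcv' : c < v' := by have := (hmem r₂ hr₂t).2.2.2; rw [hr₂] at this; linarith
      set t₁ := t.filter (fun r => r.2 < c) with ht₁
      set t₂ := t.filter (fun r => ¬ r.2 < c) with ht₂
      have hcards : t₁.card + t₂.card = t.card :=
        Finset.card_filter_add_card_filter_not _
      have hr₁m : r₁ ∈ t₁ := Finset.mem_filter.mpr ⟨hr₁t, by rw [hr₁]; exact hc1⟩
      have hr₂m : r₂ ∈ t₂ := Finset.mem_filter.mpr ⟨hr₂t, by rw [hr₂]; exact not_lt.mpr hc2.le⟩
      have hlt₁ : t₁.card < n := by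
        have : 0 < t₂.card := Finset.card_pos.mpr ⟨r₂, hr₂m⟩; omega
      have hlt₂ : t₂.card < n := by
        have : 0 < t₁.card := Finset.card_pos.mpr ⟨r₁, hr₁m⟩; omega
      have ihl := ih t₁.card hlt₁ t₁ u' u'' v'' c rfl h1 h2 hv''c.le
        (fun r hr => by
          have hrm := Finset.mem_filter.mp hr
          obtain ⟨a1, a2, a3, a4⟩ := hmem r hrm.1
          exact ⟨a1, a2, a3, hrm.2⟩)
        (fun r hr => hmult r (Finset.mem_filter.mp hr).1)
      have ihr := ih t₂.card hlt₂ t₂ u' u'' c v' rfl h1 (by linarith) hcv'.le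
        (fun r hr => by
          have hrm := Finset.mem_filter.mp hr
          obtain ⟨a1, a2, a3, a4⟩ := hmem r hrm.1
          have := (key r hrm.1).resolve_left hrm.2
          exact ⟨a1, a2, this, a4⟩)
        (fun r hr => hmult r (Finset.mem_filter.mp hr).1)
      have hadd := Fq_add_v R u' u'' v'' c v'
      have : (t.card : ℤ) = (t₁.card : ℤ) + t₂.card := by exact_mod_cast (hcards).symm
      linarith

lemma finite_rect (R : AbstractRankInvariant) {u' u'' v'' v' : ℝ}
    (h1 : u' ≤ u'') (h2 : u'' < v'') (h3 : v'' ≤ v') :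
    {p : ℝ × ℝ | u' < p.1 ∧ p.1 < u'' ∧ v'' < p.2 ∧ p.2 < v' ∧ 0 < R.mult p.1 p.2}.Finite := by
  by_contra hinf
  rw [← Set.not_infinite, not_not] at hinf
  obtain ⟨t, hts, htc⟩ := hinf.exists_subset_card_eq ((Fq R u' u'' v'' v').toNat + 1)
  have hle := count_le R t.card t u' u'' v'' v' rfl h1 h2 h3
    (fun p hp => by
      have h := hts hp
      exact ⟨h.1, h.2.1, h.2.2.1, h.2.2.2.1⟩)
    (fun p hp => (hts hp).2.2.2.2)
  have h0 : 0 ≤ Fq R u' u'' v'' v' := Fq_nonneg R h1 h2 h3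
  rw [htc] at hle
  omega

lemma mult_zero_of_lt (R : AbstractRankInvariant) (m : ℝ)
    (h0 : ∀ u v : ℝ, u < m → u < v → R.ρ u v = 0)
    {u v : ℝ} (hu : u < m) (huv : u < v) : R.mult u v = 0 := by
  set ε := min (m - u) ((v - u) / 2) / 2 with hε
  have A1 : min (m - u) ((v - u) / 2) ≤ m - u := min_le_left _ _
  have A2 : min (m - u) ((v - u) / 2) ≤ (v - u) / 2 := min_le_right _ _
  have hXpos : 0 < min (m - u) ((v - u) / 2) := lt_min (by linarith) (by linarith)
  have hεpos : 0 < ε := by rw [hε]; linarith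
  have h2ε : 2 * ε = min (m - u) ((v - u) / 2) := by rw [hε]; ring
  have hadm : u + ε < v - ε := by linarith
  have hE : R.cornerE u v ε = 0 := by
    unfold AbstractRankInvariant.cornerE
    rw [h0 (u + ε) (v - ε) (by linarith) (by linarith),
      h0 (u - ε) (v - ε) (by linarith) (by linarith),
      h0 (u + ε) (v + ε) (by linarith) (by linarith),
      h0 (u - ε) (v + ε) (by linarith) (by linarith)]
    norm_num
  have hmem : (0 : ℕ) ∈ (fun ε => (R.cornerE u v ε).toNat) '' {ε : ℝ | 0 < ε ∧ u + ε < v - ε} :=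
    ⟨ε, ⟨hεpos, hadm⟩, by show (R.cornerE u v ε).toNat = 0; rw [hE]; rfl⟩
  exact Nat.sInf_eq_zero.mpr (Or.inl hmem)

lemma mult_zero_of_gt (R : AbstractRankInvariant) (M₀ : ℝ)
    (hM : ∀ u v v' : ℝ, u < v → u < v' → M₀ ≤ v → M₀ ≤ v' → R.ρ u v = R.ρ u v')
    {u v : ℝ} (hv : M₀ < v) (huv : u < v) : R.mult u v = 0 := by
  set ε := min (v - M₀) ((v - u) / 2) / 2 with hε
  have A1 : min (v - M₀) ((v - u) / 2) ≤ v - M₀ := min_le_left _ _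
  have A2 : min (v - M₀) ((v - u) / 2) ≤ (v - u) / 2 := min_le_right _ _
  have hXpos : 0 < min (v - M₀) ((v - u) / 2) := lt_min (by linarith) (by linarith)
  have hεpos : 0 < ε := by rw [hε]; linarith
  have h2ε : 2 * ε = min (v - M₀) ((v - u) / 2) := by rw [hε]; ring
  have hadm : u + ε < v - ε := by linarith
  have hE : R.cornerE u v ε = 0 := by
    unfold AbstractRankInvariant.cornerE
    rw [hM (u + ε) (v - ε) (v + ε) (by linarith) (by linarith) (by linarith) (by linarith),
      hM (u - ε) (v - ε) (v + ε) (by linarith) (by linarith) (by linarith) (by linarith)]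
    ring
  have hmem : (0 : ℕ) ∈ (fun ε => (R.cornerE u v ε).toNat) '' {ε : ℝ | 0 < ε ∧ u + ε < v - ε} :=
    ⟨ε, ⟨hεpos, hadm⟩, by show (R.cornerE u v ε).toNat = 0; rw [hE]; rfl⟩
  exact Nat.sInf_eq_zero.mpr (Or.inl hmem)

/-- **Local Finiteness of Cornerpoints.**  Suppose `ρ(u,v) = 0` whenever `u < m`
(and `u < v`), and `ρ(u,v) = ρ(u,v')` whenever `v, v' ≥ M₀` (with `u < v`,
`u < v'`).  Then for every `ε > 0` the set of proper cornerpoints of `ρ` lying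
in `{(u,v) : u + ε < v}` is finite. -/
theorem local_finiteness_of_cornerpoints (R : AbstractRankInvariant) (m M₀ : ℝ)
    (hmM : m ≤ M₀)
    (h0 : ∀ u v : ℝ, u < m → u < v → R.ρ u v = 0)
    (hM : ∀ u v v' : ℝ, u < v → u < v' → M₀ ≤ v → M₀ ≤ v' → R.ρ u v = R.ρ u v') :
    ∀ ε : ℝ, 0 < ε →
      {p : ℝ × ℝ | p.1 + ε < p.2 ∧ 0 < R.mult p.1 p.2}.Finite := by
  intro ε hε
  have key : ∀ p : ℝ × ℝ, p.1 + ε < p.2 → 0 < R.mult p.1 p.2 → m ≤ p.1 ∧ p.2 ≤ M₀ := by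
    intro p hpε hpm
    constructor
    · by_contra h
      push_neg at h
      rw [mult_zero_of_lt R m h0 h (by linarith)] at hpm
      exact absurd hpm (by simp)
    · by_contra h
      push_neg at h
      rw [mult_zero_of_gt R M₀ hM h (by linarith)] at hpm
      exact absurd hpm (by simp)
  set N := ⌊4 * (M₀ - m) / ε⌋₊ + 2 with hN
  have hfin : ∀ j : ℕ,
      {p : ℝ × ℝ | m - 1 < p.1 ∧ p.1 < m + j * ε / 4 ∧ m + j * ε / 4 + ε / 2 < p.2 ∧
        p.2 < m + j * ε / 4 + ε / 2 + (M₀ + 2 - m) ∧ 0 < R.mult p.1 p.2}.Finite := by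
    intro j
    have hj0 : (0 : ℝ) ≤ (j : ℝ) * ε / 4 := by positivity
    exact finite_rect R (by linarith) (by linarith) (by linarith)
  apply Set.Finite.subset
    (Set.Finite.biUnion (Finset.range N).finite_toSet
      (fun j _ => hfin j))
  rintro p ⟨hpε, hpm⟩
  obtain ⟨hm, hM'⟩ := key p hpε hpm
  set fl := ⌊4 * (p.1 - m) / ε⌋₊ with hfl
  set j := fl + 1 with hj
  have hx0 : (0 : ℝ) ≤ 4 * (p.1 - m) / ε := by
    apply div_nonneg (by linarith) hε.le
  have hfle : (fl : ℝ) ≤ 4 * (p.1 - m) / ε := Nat.floor_le hx0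
  have hflt : 4 * (p.1 - m) / ε < (fl : ℝ) + 1 := Nat.lt_floor_add_one _
  have hb1 : (fl : ℝ) * ε ≤ 4 * (p.1 - m) := (le_div_iff₀ hε).mp hfle
  have hb2 : 4 * (p.1 - m) < ((fl : ℝ) + 1) * ε := (div_lt_iff₀ hε).mp hflt
  have hjr : (j : ℝ) = (fl : ℝ) + 1 := by push_cast [hj]; ring
  have ha1 : p.1 < m + j * ε / 4 := by rw [hjr]; linarith
  have ha2 : m + (j : ℝ) * ε / 4 ≤ p.1 + ε / 4 := by rw [hjr]; linarith
  have hjN : j ∈ Finset.range N := by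
    rw [Finset.mem_range, hN, hj]
    have hmono : fl ≤ ⌊4 * (M₀ - m) / ε⌋₊ := by
      apply Nat.floor_le_floor
      gcongr <;> linarith
    omega
  refine Set.mem_biUnion hjN ?_
  have hj0 : (0 : ℝ) ≤ (j : ℝ) * ε / 4 := by positivity
  exact ⟨by linarith, ha1, by linarith, by linarith, hpm⟩
end

section
/- Let ρ : Δ⁺ → ℕ be an abstract rank invariant that is right-continuous in each variable, and suppose there are real numbers m ≤ M₀ such that ρ(u,v) = 0 whenever u < m (and u < v), and ρ(u,v) = ρ(u,v') whenever v, v' ≥ M₀ (with u < v and u < v'). Then for every (ū,v̄) ∈ Δ⁺, ρ(ū,v̄) equals the (finite) sum of the multiplicities μ(u,v) over all points (u,v) ∈ Δ⁺ with u ≤ ū and v > v̄, plus the (finite) sum of the multiplicities at infinity μ∞(u) over all u ≤ ū; in particular, only finitely many terms of these sums are nonzero, and ρ is completely determined by its persistence diagram. -/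
open AbstractRankInvariant


set_option linter.unusedSectionVars false

open Set

noncomputable def lvalN (f : ℝ → ℕ) (x : ℝ) : ℕ := sSup (f '' Set.Iio x)
noncomputable def jmpN (f : ℝ → ℕ) (x : ℝ) : ℕ := f x - lvalN f x
noncomputable def lvalA (f : ℝ → ℕ) (x : ℝ) : ℕ := sInf (f '' Set.Iio x)
noncomputable def jmpA (f : ℝ → ℕ) (x : ℝ) : ℕ := lvalA f x - f x

lemma img_ne (f : ℝ → ℕ) (x : ℝ) : (f '' Set.Iio x).Nonempty :=
  ⟨f (x-1), ⟨x-1, by simp, rfl⟩⟩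

lemma lvalN_le (f : ℝ → ℕ) (hm : Monotone f) (x : ℝ) : lvalN f x ≤ f x := by
  apply csSup_le (img_ne f x)
  rintro b ⟨y, hy, rfl⟩; exact hm (le_of_lt hy)

lemma lvalN_attain (f : ℝ → ℕ) (hm : Monotone f) (x : ℝ) :
    ∃ ε > 0, ∀ ε', 0 < ε' → ε' ≤ ε → f (x - ε') = lvalN f x := by
  have hbdd : BddAbove (f '' Set.Iio x) := ⟨f x, by rintro b ⟨y, hy, rfl⟩; exact hm hy.le⟩
  obtain ⟨y, hy, hfy⟩ := Nat.sSup_mem (img_ne f x) hbdd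
  refine ⟨x - y, by linarith [mem_Iio.mp hy], fun ε' h1 h2 => ?_⟩
  apply le_antisymm
  · exact le_csSup hbdd ⟨x - ε', by simp [mem_Iio]; linarith, rfl⟩
  · show sSup _ ≤ _
    rw [← hfy]; exact hm (by linarith)

lemma lvalN_const (f : ℝ → ℕ) (hm : Monotone f) {x y : ℝ} (hy : y < x)
    (hc : ∀ z, y ≤ z → z < x → f z = f y) : lvalN f x = f y := by
  apply le_antisymm
  · apply csSup_le (img_ne f x)
    rintro b ⟨z, hz, rfl⟩
    rcases le_or_gt y z with h | h
    · exact le_of_eq (hc z h hz)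
    · exact hm h.le
  · exact le_csSup ⟨f x, by rintro b ⟨z, hz, rfl⟩; exact hm hz.le⟩ ⟨y, hy, rfl⟩

/-- 1-D representation lemma, nondecreasing case. -/
lemma oneD (f : ℝ → ℕ) (hm : Monotone f)
    (hrc : ∀ x : ℝ, ∃ δ > 0, ∀ y, x ≤ y → y < x + δ → f y = f x)
    (a : ℝ) (h0 : ∀ x, x ≤ a → f x = 0) :
    ∀ c : ℝ, {x : ℝ | x ≤ c ∧ jmpN f x ≠ 0}.Finite ∧
      (∑ᶠ x ∈ Set.Iic c, jmpN f x) = f c := by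
  suffices H : ∀ n : ℕ, ∀ c : ℝ, f c ≤ n → {x : ℝ | x ≤ c ∧ jmpN f x ≠ 0}.Finite ∧
      (∑ᶠ x ∈ Set.Iic c, jmpN f x) = f c by
    exact fun c => H (f c) c le_rfl
  intro n
  induction n with
  | zero =>
    intro c hc
    have hz : ∀ x, x ≤ c → jmpN f x = 0 := by
      intro x hx
      have : f x = 0 := le_antisymm ((hm hx).trans hc) (Nat.zero_le _)
      simp [jmpN, this]
    constructor
    · apply Set.Finite.subset (Set.finite_empty)
      rintro x ⟨hx, hj⟩; exact absurd (hz x hx) hj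
    · rw [Nat.le_zero.mp hc]
      exact finsum_mem_of_eqOn_zero (fun x hx => hz x hx)
  | succ n ih =>
    intro c hc
    rcases Nat.lt_or_ge (f c) (n+1) with hlt | hge
    · exact ih c (Nat.lt_succ_iff.mp hlt)
    have hfc : f c = n + 1 := le_antisymm hc hge
    have hfcpos : 0 < f c := by omega
    -- the set D of points below c with smaller value
    set D : Set ℝ := {x : ℝ | x ≤ c ∧ f x < f c} with hD
    have hx₀ : min a c - 1 ∈ D := by
      constructor
      · show min a c - 1 ≤ c
        have := min_le_right a c; linarith
      · rw [h0 _ (by have := min_le_left a c; linarith)]; exact hfcpos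
    have hDne : D.Nonempty := ⟨_, hx₀⟩
    have hDbdd : BddAbove D := ⟨c, fun x hx => hx.1⟩
    set σ := sSup D with hσ
    have hσc : σ ≤ c := csSup_le hDne (fun x hx => hx.1)
    have hF1 : ∀ x, σ < x → x ≤ c → f x = f c := by
      intro x h1 h2
      by_contra hne
      have : f x < f c := lt_of_le_of_ne (hm h2) hne
      exact absurd (le_csSup hDbdd ⟨h2, this⟩) (not_le.mpr h1)
    have hF2 : f σ = f c := by
      rcases eq_or_lt_of_le hσc with h | h
      · rw [h]
      · obtain ⟨δ, hδ, hδc⟩ := hrc σ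
        have hy : σ < min c (σ + δ/2) := lt_min h (by linarith)
        rw [← hδc (min c (σ + δ/2)) hy.le (by have := min_le_right c (σ+δ/2); linarith)]
        exact hF1 _ hy (min_le_left _ _)
    obtain ⟨εσ, hεσ, hεσc⟩ := lvalN_attain f hm σ
    have hlv : lvalN f σ < f c := by
      obtain ⟨y, hyD, hy⟩ := exists_lt_of_lt_csSup hDne (show σ - εσ < σ by linarith)
      have hyσ : y ≤ σ := le_csSup hDbdd hyD
      rcases eq_or_lt_of_le hyσ with h | h
      · rw [h] at hyD
        have h2 : f σ < f c := hyD.2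
        omega
      · rw [← hεσc (σ - y) (by linarith) (by linarith)]
        simpa using hyD.2
    set c' := σ - εσ with hc'
    have hfc' : f c' = lvalN f σ := hεσc εσ hεσ le_rfl
    have hconst : ∀ z, c' ≤ z → z < σ → f z = f c' := by
      intro z h1 h2
      rw [hfc', ← hεσc (σ - z) (by linarith) (by linarith)]
      congr 1; ring
    -- jumps in (c', c] other than σ vanish
    have hF5 : ∀ x, c' < x → x ≤ c → x ≠ σ → jmpN f x = 0 := by
      intro x h1 h2 hne
      rcases lt_or_gt_of_ne hne with hlt | hgt
      · -- x < σ : f constant near x from the left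
        have : lvalN f x = f x := by
          rw [lvalN_const f hm (show (c'+x)/2 < x by linarith)
            (fun z hz1 hz2 => by rw [hconst z (by linarith) (by linarith),
              hconst ((c'+x)/2) (by linarith) (by linarith)])]
          rw [hconst ((c'+x)/2) (by linarith) (by linarith), hconst x h1.le hlt]
        simp [jmpN, this]
      · -- x > σ
        have : lvalN f x = f x := by
          rw [lvalN_const f hm (show (σ+x)/2 < x by linarith)
            (fun z hz1 hz2 => by rw [hF1 z (by linarith) (by linarith),
              hF1 ((σ+x)/2) (by linarith) (by linarith)])]
          rw [hF1 ((σ+x)/2) (by linarith) (by linarith), hF1 x hgt h2]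
        simp [jmpN, this]
    have hjσ : jmpN f σ = f c - lvalN f σ := by
      unfold jmpN; rw [hF2]
    have hjσpos : jmpN f σ ≠ 0 := by omega
    have hlv' : lvalN f σ = f c' := hfc'.symm
    obtain ⟨hfin', hsum'⟩ := ih c' (by omega)
    constructor
    · apply Set.Finite.subset (hfin'.union (Set.finite_singleton σ))
      rintro x ⟨hx1, hx2⟩
      rcases le_or_gt x c' with h | h
      · exact Or.inl ⟨h, hx2⟩
      · right
        by_contra hne
        exact hx2 (hF5 x h hx1 (by simpa using hne))
    · have hsplit : Set.Iic c = Set.Iic c' ∪ Set.Ioc c' c :=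
        (Set.Iic_union_Ioc_eq_Iic (by linarith : c' ≤ c)).symm
      have hsupp1 : (Set.Iic c' ∩ Function.support (jmpN f)).Finite := by
        apply hfin'.subset; rintro x ⟨h1, h2⟩; exact ⟨h1, h2⟩
      have hsupp2 : (Set.Ioc c' c ∩ Function.support (jmpN f)).Finite := by
        apply Set.Finite.subset (Set.finite_singleton σ)
        rintro x ⟨⟨h1, h2⟩, h3⟩
        by_contra hne
        exact h3 (hF5 x h1 h2 (by simpa using hne))
      rw [hsplit, finsum_mem_union' (by
          rw [Set.disjoint_left]; rintro x (hx : x ≤ c') ⟨h1, h2⟩; linarith) hsupp1 hsupp2]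
      have h2 : (∑ᶠ x ∈ Set.Ioc c' c, jmpN f x) = jmpN f σ := by
        rw [finsum_mem_inter_support_eq (jmpN f) _ ({σ} : Set ℝ) ?_, finsum_mem_singleton]
        ext x
        simp only [Set.mem_inter_iff, Set.mem_Ioc, Function.mem_support, Set.mem_singleton_iff]
        constructor
        · rintro ⟨⟨h1, h2⟩, h3⟩
          refine ⟨?_, h3⟩
          by_contra hne; exact h3 (hF5 x h1 h2 hne)
        · rintro ⟨rfl, h3⟩
          exact ⟨⟨by linarith, hσc⟩, h3⟩
      rw [hsum', h2, hjσ, hlv']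
      have := lvalN_le f hm σ
      have h3 : f c' ≤ f c := by rw [← hlv']; omega
      omega

lemma lvalA_ge (f : ℝ → ℕ) (hm : Antitone f) (x : ℝ) : f x ≤ lvalA f x := by
  apply le_csInf (img_ne f x)
  rintro b ⟨y, hy, rfl⟩; exact hm (le_of_lt hy)

lemma lvalA_attain (f : ℝ → ℕ) (hm : Antitone f) (x : ℝ) :
    ∃ ε > 0, ∀ ε', 0 < ε' → ε' ≤ ε → f (x - ε') = lvalA f x := by
  obtain ⟨y, hy, hfy⟩ := Nat.sInf_mem (img_ne f x)
  refine ⟨x - y, by have := mem_Iio.mp hy; linarith, fun ε' h1 h2 => ?_⟩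
  apply le_antisymm
  · show _ ≤ sInf _
    rw [← hfy]; exact hm (by linarith)
  · exact csInf_le (OrderBot.bddBelow _) ⟨x - ε', by simp [mem_Iio]; linarith, rfl⟩

/-- `jmpA f x = 0` as soon as `f` takes value `f x` somewhere strictly below `x`. -/
lemma jmpA_zero (f : ℝ → ℕ) {x y : ℝ} (hy : y < x) (hv : f y = f x) : jmpA f x = 0 := by
  have : lvalA f x ≤ f x := hv ▸ csInf_le (OrderBot.bddBelow _) ⟨y, hy, rfl⟩
  simp [jmpA]; omega

/-- 1-D representation lemma, nonincreasing case. -/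
lemma oneD' (f : ℝ → ℕ) (hm : Antitone f)
    (hrc : ∀ x : ℝ, ∃ δ > 0, ∀ y, x ≤ y → y < x + δ → f y = f x)
    (b : ℝ) (hb : ∀ x, b ≤ x → f x = f b) :
    ∀ s : ℝ, {x : ℝ | s < x ∧ jmpA f x ≠ 0}.Finite ∧
      (∑ᶠ x ∈ Set.Ioi s, jmpA f x) = f s - f b := by
  suffices H : ∀ n : ℕ, ∀ s : ℝ, f s - f b ≤ n → {x : ℝ | s < x ∧ jmpA f x ≠ 0}.Finite ∧
      (∑ᶠ x ∈ Set.Ioi s, jmpA f x) = f s - f b by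
    exact fun s => H (f s - f b) s le_rfl
  have hfb : ∀ x : ℝ, f b ≤ f x := by
    intro x
    rcases le_total x b with h | h
    · exact hm h
    · exact le_of_eq (hb x h).symm
  intro n
  induction n with
  | zero =>
    intro s hs
    have hsb : f s = f b := by have := hfb s; omega
    have hconst : ∀ x, s ≤ x → f x = f s := by
      intro x hx
      have h1 : f x ≤ f s := hm hx
      have h2 : f b ≤ f x := hfb x
      omega
    have hz : ∀ x, s < x → jmpA f x = 0 := by
      intro x hx
      exact jmpA_zero f (show (s+x)/2 < x by linarith)
        (by rw [hconst ((s+x)/2) (by linarith), hconst x hx.le])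
    constructor
    · apply Set.Finite.subset (Set.finite_empty)
      rintro x ⟨hx, hj⟩; exact absurd (hz x hx) hj
    · have h0 : (∑ᶠ x ∈ Set.Ioi s, jmpA f x) = 0 :=
        finsum_mem_of_eqOn_zero (fun x hx => hz x hx)
      rw [h0]; omega
  | succ n ih =>
    intro s hs
    rcases Nat.lt_or_ge (f s - f b) (n+1) with hlt | hge
    · exact ih s (by omega)
    have hfs : f b < f s := by omega
    set D : Set ℝ := {x : ℝ | f x < f s} with hD
    have hDne : D.Nonempty := ⟨b, hfs⟩
    have hDbdd : BddBelow D := by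
      refine ⟨s, fun x hx => ?_⟩
      by_contra hc
      have : f s ≤ f x := hm (le_of_not_ge hc)
      have : f x < f s := hx
      omega
    set σ := sInf D with hσ
    have hσs : s ≤ σ := le_csInf hDne (fun x hx => by
      by_contra hc
      have h1 : f s ≤ f x := hm (le_of_not_ge hc)
      have h2 : f x < f s := hx
      omega)
    have hG1 : ∀ x, s ≤ x → x < σ → f x = f s := by
      intro x h1 h2
      have hx : x ∉ D := fun hx => absurd (csInf_le hDbdd hx) (not_le.mpr h2)
      have : ¬ f x < f s := hx
      have := hm h1
      omega
    have hG2 : f σ < f s := by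
      obtain ⟨δ, hδ, hδc⟩ := hrc σ
      obtain ⟨y, hyD, hy⟩ := (csInf_lt_iff hDbdd hDne).mp (show σ < σ + δ by linarith)
      have hσy : σ ≤ y := csInf_le hDbdd hyD
      have : f y = f σ := hδc y hσy (by linarith)
      have h2 : f y < f s := hyD
      omega
    have hσs' : s < σ := by
      rcases eq_or_lt_of_le hσs with h | h
      · exfalso; rw [← h] at hG2; omega
      · exact h
    have hG4 : lvalA f σ = f s := by
      apply le_antisymm
      · exact csInf_le (OrderBot.bddBelow _) ⟨s, hσs', rfl⟩
      · apply le_csInf (img_ne f σ)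
        rintro w ⟨y, hy, rfl⟩
        rcases le_total s y with h | h
        · exact le_of_eq (hG1 y h hy).symm
        · exact hm h
    have hjσ : jmpA f σ = f s - f σ := by unfold jmpA; rw [hG4]
    have hjσne : jmpA f σ ≠ 0 := by omega
    have hG6 : ∀ x, s < x → x < σ → jmpA f x = 0 := by
      intro x h1 h2
      exact jmpA_zero f (show (s+x)/2 < x by linarith)
        (by rw [hG1 ((s+x)/2) (by linarith) (by linarith), hG1 x h1.le h2])
    obtain ⟨hfin', hsum'⟩ := ih σ (by have := hfb σ; omega)
    constructor
    · apply Set.Finite.subset ((Set.finite_singleton σ).union hfin')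
      rintro x ⟨hx1, hx2⟩
      rcases le_or_gt x σ with h | h
      · left
        rcases eq_or_lt_of_le h with h' | h'
        · exact h'
        · exact absurd (hG6 x hx1 h') hx2
      · exact Or.inr ⟨h, hx2⟩
    · have hsplit : Set.Ioi s = Set.Ioc s σ ∪ Set.Ioi σ :=
        (Set.Ioc_union_Ioi_eq_Ioi hσs'.le).symm
      have hsupp1 : (Set.Ioc s σ ∩ Function.support (jmpA f)).Finite := by
        apply Set.Finite.subset (Set.finite_singleton σ)
        rintro x ⟨⟨h1, h2⟩, h3⟩
        rcases eq_or_lt_of_le h2 with h' | h'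
        · exact h'
        · exact absurd (hG6 x h1 h') h3
      have hsupp2 : (Set.Ioi σ ∩ Function.support (jmpA f)).Finite := by
        apply hfin'.subset; rintro x ⟨h1, h2⟩; exact ⟨h1, h2⟩
      rw [hsplit, finsum_mem_union' (by
          rw [Set.disjoint_left]; rintro x ⟨h1, h2⟩ (h3 : σ < x); linarith) hsupp1 hsupp2]
      have h2 : (∑ᶠ x ∈ Set.Ioc s σ, jmpA f x) = jmpA f σ := by
        rw [finsum_mem_inter_support_eq (jmpA f) _ ({σ} : Set ℝ) ?_, finsum_mem_singleton]
        ext x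
        simp only [Set.mem_inter_iff, Set.mem_Ioc, Function.mem_support, Set.mem_singleton_iff]
        constructor
        · rintro ⟨⟨h1, h2⟩, h3⟩
          refine ⟨?_, h3⟩
          rcases eq_or_lt_of_le h2 with h' | h'
          · exact h'
          · exact absurd (hG6 x h1 h') h3
        · rintro ⟨rfl, h3⟩
          exact ⟨⟨hσs', le_rfl⟩, h3⟩
      rw [hsum', h2, hjσ]
      have := hfb σ
      omega
open Set

section Machinery

variable (R : AbstractRankInvariant)

/-- Left limit (in the first variable) of `ρ(·, w)` at `u`. -/
noncomputable def lam (u w : ℝ) : ℕ := sSup ((fun ε : ℝ => R.ρ (u - ε) w) '' Set.Ioi 0)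

variable {R}

lemma lam_img_ne (u w : ℝ) : ((fun ε : ℝ => R.ρ (u - ε) w) '' Set.Ioi 0).Nonempty :=
  ⟨R.ρ (u - 1) w, ⟨1, by simp, rfl⟩⟩

lemma lam_bdd {u w : ℝ} (huw : u < w) :
    BddAbove ((fun ε : ℝ => R.ρ (u - ε) w) '' Set.Ioi 0) := by
  refine ⟨R.ρ u w, ?_⟩
  rintro b ⟨ε, hε, rfl⟩
  exact R.mono_u (by simp [le_of_lt (mem_Ioi.mp hε)]) huw

lemma lam_le {u w : ℝ} (huw : u < w) : lam R u w ≤ R.ρ u w := by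
  apply csSup_le (lam_img_ne u w)
  rintro b ⟨ε, hε, rfl⟩
  exact R.mono_u (by simp [le_of_lt (mem_Ioi.mp hε)]) huw

lemma lam_ge {u w : ℝ} (huw : u < w) {ε : ℝ} (hε : 0 < ε) : R.ρ (u - ε) w ≤ lam R u w :=
  le_csSup (lam_bdd huw) ⟨ε, hε, rfl⟩

lemma lam_attain {u w : ℝ} (huw : u < w) :
    ∃ e > 0, ∀ ε, 0 < ε → ε ≤ e → R.ρ (u - ε) w = lam R u w := by
  obtain ⟨ε₁, hε₁, hv⟩ := Nat.sSup_mem (lam_img_ne u w) (lam_bdd huw)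
  have hε₁' : (0:ℝ) < ε₁ := mem_Ioi.mp hε₁
  refine ⟨ε₁, hε₁', fun ε h1 h2 => le_antisymm (lam_ge huw h1) ?_⟩
  calc lam R u w = R.ρ (u - ε₁) w := hv.symm
    _ ≤ R.ρ (u - ε) w := R.mono_u (by linarith) (by linarith)

lemma lam_antitone {u w w' : ℝ} (huw : u < w) (hww' : w ≤ w') : lam R u w' ≤ lam R u w := by
  apply csSup_le (lam_img_ne u w')
  rintro b ⟨ε, hε, rfl⟩
  have h1 : R.ρ (u - ε) w' ≤ R.ρ (u - ε) w :=
    R.mono_v (by have := mem_Ioi.mp hε; linarith) hww'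
  exact h1.trans (lam_ge huw (mem_Ioi.mp hε))

variable (R)

/-- `u ↦ ρ(u, V)` clamped at `ubar`. -/
noncomputable def gf (ub V : ℝ) : ℝ → ℕ := fun u => R.ρ (min u ub) V

/-- `u ↦ ρ(u, vbar) − ρ(u, V)` clamped at `ubar`. -/
noncomputable def hf (ub vb V : ℝ) : ℝ → ℕ :=
  fun u => R.ρ (min u ub) vb - R.ρ (min u ub) V

/-- `v ↦ ρ(u, v) − (left limit in u of ρ(·,v) at u)`, with `v` clamped
to `[vbar, V]`. -/
noncomputable def kf (vb V u : ℝ) : ℝ → ℕ :=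
  fun v => R.ρ u (max vb (min v V)) - lam R u (max vb (min v V))

variable {R}

section Gf

variable {ub V : ℝ} (hubV : ub < V)
include hubV

lemma gf_mono : Monotone (gf R ub V) := by
  intro u₁ u₂ h12
  exact R.mono_u (min_le_min h12 le_rfl) (lt_of_le_of_lt (min_le_right _ _) hubV)

lemma gf_hrc (hrc : R.RightContinuous) :
    ∀ x : ℝ, ∃ δ > 0, ∀ y, x ≤ y → y < x + δ → gf R ub V y = gf R ub V x := by
  intro x
  rcases lt_or_ge x ub with hx | hx
  · obtain ⟨δ₁, hδ₁, hc⟩ := (hrc x V (hx.trans hubV)).1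
    refine ⟨min δ₁ (ub - x), lt_min hδ₁ (by linarith), fun y h1 h2 => ?_⟩
    have hyu : y < ub := by have := min_le_right δ₁ (ub - x); linarith
    have hyd : y < x + δ₁ := by have := min_le_left δ₁ (ub - x); linarith
    rcases eq_or_lt_of_le h1 with rfl | h1'
    · rfl
    · show R.ρ (min y ub) V = R.ρ (min x ub) V
      rw [min_eq_left hyu.le, min_eq_left hx.le]
      exact hc y h1' hyd (hyu.trans hubV)
  · refine ⟨1, one_pos, fun y h1 h2 => ?_⟩
    show R.ρ (min y ub) V = R.ρ (min x ub) V
    rw [min_eq_right hx, min_eq_right (hx.trans h1)]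

omit hubV in
lemma gf_zero {m : ℝ} (hmV : m ≤ V) (h0 : ∀ u v : ℝ, u < m → u < v → R.ρ u v = 0) :
    ∀ x : ℝ, x ≤ m - 1 → gf R ub V x = 0 := by
  intro x hx
  have h1 : min x ub < m := lt_of_le_of_lt (min_le_left _ _) (by linarith)
  exact h0 _ _ h1 (lt_of_lt_of_le h1 hmV)

end Gf

section Hf

variable {ub vb V : ℝ} (hubv : ub < vb) (hvV : vb ≤ V)

include hubv hvV

lemma hf_mono : Monotone (hf R ub vb V) := by
  intro u₁ u₂ h12
  set a₁ := min u₁ ub; set a₂ := min u₂ ub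
  have ha : a₁ ≤ a₂ := min_le_min h12 le_rfl
  have ha2 : a₂ < vb := lt_of_le_of_lt (min_le_right _ _) hubv
  have hj := R.jump ha ha2 hvV
  have hd1 : R.ρ a₁ V ≤ R.ρ a₁ vb := R.mono_v (lt_of_le_of_lt (ha.trans (min_le_right u₂ ub)) hubv) hvV
  have hd2 : R.ρ a₂ V ≤ R.ρ a₂ vb := R.mono_v ha2 hvV
  show R.ρ a₁ vb - R.ρ a₁ V ≤ R.ρ a₂ vb - R.ρ a₂ V
  omega

lemma hf_hrc (hrc : R.RightContinuous) :
    ∀ x : ℝ, ∃ δ > 0, ∀ y, x ≤ y → y < x + δ → hf R ub vb V y = hf R ub vb V x := by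
  intro x
  rcases lt_or_ge x ub with hx | hx
  · obtain ⟨δ₁, hδ₁, hc₁⟩ := (hrc x vb (hx.trans hubv)).1
    obtain ⟨δ₂, hδ₂, hc₂⟩ := (hrc x V ((hx.trans hubv).trans_le hvV)).1
    refine ⟨min (min δ₁ δ₂) (ub - x), lt_min (lt_min hδ₁ hδ₂) (by linarith), fun y h1 h2 => ?_⟩
    have h3 := min_le_left (min δ₁ δ₂) (ub - x)
    have h4 := min_le_right (min δ₁ δ₂) (ub - x)
    have h5 := min_le_left δ₁ δ₂
    have h6 := min_le_right δ₁ δ₂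
    have hyu : y < ub := by linarith
    rcases eq_or_lt_of_le h1 with rfl | h1'
    · rfl
    · show R.ρ (min y ub) vb - R.ρ (min y ub) V = R.ρ (min x ub) vb - R.ρ (min x ub) V
      rw [min_eq_left hyu.le, min_eq_left hx.le,
        hc₁ y h1' (by linarith) (hyu.trans hubv),
        hc₂ y h1' (by linarith) ((hyu.trans hubv).trans_le hvV)]
  · refine ⟨1, one_pos, fun y h1 h2 => ?_⟩
    show R.ρ (min y ub) vb - R.ρ (min y ub) V = R.ρ (min x ub) vb - R.ρ (min x ub) V
    rw [min_eq_right hx, min_eq_right (hx.trans h1)]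

omit hvV in
lemma hf_zero {m : ℝ} (hmV : m ≤ V)
    (h0 : ∀ u v : ℝ, u < m → u < v → R.ρ u v = 0) :
    ∀ x : ℝ, x ≤ m - 1 → hf R ub vb V x = 0 := by
  intro x hx
  have h1 : min x ub < m := lt_of_le_of_lt (min_le_left _ _) (by linarith)
  have h2 : min x ub < vb := lt_of_le_of_lt (min_le_right _ _) hubv
  show R.ρ (min x ub) vb - R.ρ (min x ub) V = 0
  rw [h0 _ _ h1 h2, h0 _ _ h1 (lt_of_lt_of_le h1 hmV)]

end Hf

end Machinery
open Set

section Kf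

variable {R : AbstractRankInvariant} {vb V u : ℝ} (hu : u < vb) (hvV : vb ≤ V)

include hu hvV

lemma kf_eq {v : ℝ} (h1 : vb ≤ v) (h2 : v ≤ V) :
    kf R vb V u v = R.ρ u v - lam R u v := by
  unfold kf; rw [min_eq_left h2, max_eq_right h1]

lemma kf_antitone : Antitone (kf R vb V u) := by
  intro v₁ v₂ h12
  unfold kf
  set w₁ := max vb (min v₁ V) with hw₁
  set w₂ := max vb (min v₂ V) with hw₂
  have hw12 : w₁ ≤ w₂ := max_le_max le_rfl (min_le_min h12 le_rfl)
  have huw₁ : u < w₁ := lt_of_lt_of_le hu (le_max_left _ _)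
  have huw₂ : u < w₂ := lt_of_lt_of_le huw₁ hw12
  obtain ⟨e₁, he₁, hc₁⟩ := lam_attain huw₁
  obtain ⟨e₂, he₂, hc₂⟩ := lam_attain huw₂
  set e := min e₁ e₂
  have he : 0 < e := lt_min he₁ he₂
  have h₁ : R.ρ (u - e) w₁ = lam R u w₁ := hc₁ e he (min_le_left _ _)
  have h₂ : R.ρ (u - e) w₂ = lam R u w₂ := hc₂ e he (min_le_right _ _)
  have hj := R.jump (show u - e ≤ u by linarith) huw₁ hw12
  have hl₁ := lam_le (R := R) huw₁
  have hl₂ := lam_le (R := R) huw₂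
  omega

omit hu hvV in
lemma kf_const {x : ℝ} (hx : V ≤ x) : kf R vb V u x = kf R vb V u V := by
  unfold kf
  rw [min_eq_right hx, min_eq_left (le_refl V)]

lemma kf_hrc (hrc : R.RightContinuous) :
    ∀ x : ℝ, ∃ δ > 0, ∀ y, x ≤ y → y < x + δ → kf R vb V u y = kf R vb V u x := by
  intro x
  rcases lt_or_ge x vb with hx | hx
  · refine ⟨vb - x, by linarith, fun y h1 h2 => ?_⟩
    have hy : y < vb := by linarith
    unfold kf
    rw [max_eq_left (le_trans (min_le_left _ _) hy.le),
      max_eq_left (le_trans (min_le_left _ _) hx.le)]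
  rcases le_or_gt V x with hx2 | hx2
  · refine ⟨1, one_pos, fun y h1 h2 => ?_⟩
    rw [kf_const (hx2.trans h1), kf_const hx2]
  · -- vb ≤ x < V
    have hux : u < x := lt_of_lt_of_le hu hx
    obtain ⟨δa, hδa, hca⟩ := (hrc u x hux).2
    obtain ⟨e, he, hce⟩ := lam_attain hux
    obtain ⟨δb, hδb, hcb⟩ := (hrc (u - e) x (by linarith)).2
    refine ⟨min (min δa δb) (V - x), lt_min (lt_min hδa hδb) (by linarith), fun y h1 h2 => ?_⟩
    have h3 := min_le_left (min δa δb) (V - x)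
    have h4 := min_le_right (min δa δb) (V - x)
    have h5 := min_le_left δa δb
    have h6 := min_le_right δa δb
    have hyV : y ≤ V := by linarith
    have hclx : max vb (min x V) = x := by rw [min_eq_left hx2.le, max_eq_right hx]
    have hcly : max vb (min y V) = y := by rw [min_eq_left hyV, max_eq_right (hx.trans h1)]
    rcases eq_or_lt_of_le h1 with rfl | h1'
    · rfl
    · have hρ : R.ρ u y = R.ρ u x := hca y h1' (by linarith)
      have hlam : lam R u y = lam R u x := by
        apply le_antisymm (lam_antitone hux h1)
        calc lam R u x = R.ρ (u - e) x := (hce e he le_rfl).symm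
          _ = R.ρ (u - e) y := (hcb y h1' (by linarith)).symm
          _ ≤ lam R u y := lam_ge (by linarith) he
      unfold kf
      rw [hclx, hcly, hρ, hlam]

/-- relation between the jump of `hf` at `u` and the values of `kf`. -/
lemma jmpN_hf_eq {ub : ℝ} (hrc0 : u ≤ ub) (hbv : ub < vb) :
    jmpN (hf R ub vb V) u = kf R vb V u vb - kf R vb V u V := by
  have huV : u < V := lt_of_lt_of_le hu hvV
  obtain ⟨ε₃, hε₃, hc₃⟩ := lvalN_attain (hf R ub vb V) (hf_mono hbv hvV) u
  obtain ⟨e₂, he₂, hc₂⟩ := lam_attain hu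
  obtain ⟨e₃, he₃, hc₃'⟩ := lam_attain huV
  set ε := min ε₃ (min e₂ e₃) with hε
  have hεpos : 0 < ε := lt_min hε₃ (lt_min he₂ he₃)
  have h1 := min_le_left ε₃ (min e₂ e₃)
  have h2 := (min_le_right ε₃ (min e₂ e₃)).trans (min_le_left e₂ e₃)
  have h3 := (min_le_right ε₃ (min e₂ e₃)).trans (min_le_right e₂ e₃)
  have hlv : lvalN (hf R ub vb V) u = R.ρ (u - ε) vb - R.ρ (u - ε) V := by
    rw [← hc₃ ε hεpos h1]
    show hf R ub vb V (u - ε) = _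
    unfold hf
    rw [min_eq_left (by linarith)]
  have hb : R.ρ (u - ε) vb = lam R u vb := hc₂ ε hεpos h2
  have hd : R.ρ (u - ε) V = lam R u V := hc₃' ε hεpos h3
  have hkvb : kf R vb V u vb = R.ρ u vb - lam R u vb := kf_eq hu hvV le_rfl hvV
  have hkV : kf R vb V u V = R.ρ u V - lam R u V := kf_eq hu hvV hvV le_rfl
  have hfu : hf R ub vb V u = R.ρ u vb - R.ρ u V := by
    unfold hf; rw [min_eq_left hrc0]
  have hba : lam R u vb ≤ R.ρ u vb := lam_le hu
  have hdc : lam R u V ≤ R.ρ u V := lam_le huV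
  have hca : R.ρ u V ≤ R.ρ u vb := R.mono_v hu hvV
  have hdb : lam R u V ≤ lam R u vb := lam_antitone hu hvV
  have hmono : lvalN (hf R ub vb V) u ≤ hf R ub vb V u :=
    lvalN_le _ (hf_mono hbv hvV) u
  have hanti : kf R vb V u V ≤ kf R vb V u vb := kf_antitone hu hvV hvV
  unfold jmpN
  omega

end Kf
section MultEq

variable {R : AbstractRankInvariant}

lemma cornerE_nonneg_ineq {u v ε ε' : ℝ} (hε' : 0 < ε') (hee : ε' ≤ ε) (hadm : u + ε < v - ε) :
    R.cornerE u v ε' ≤ R.cornerE u v ε := by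
  have hε : 0 < ε := lt_of_lt_of_le hε' hee
  have j1 := R.jump (show u - ε' ≤ u + ε' by linarith) (show u + ε' < v + ε' by linarith)
    (show v + ε' ≤ v + ε by linarith)
  have j2 := R.jump (show u - ε' ≤ u + ε' by linarith) (show u + ε' < v - ε by linarith)
    (show v - ε ≤ v - ε' by linarith)
  have j3 := R.jump (show u + ε' ≤ u + ε by linarith) (show u + ε < v - ε by linarith)
    (show v - ε ≤ v + ε by linarith)
  have j4 := R.jump (show u - ε ≤ u - ε' by linarith) (show u - ε' < v - ε by linarith)
    (show v - ε ≤ v + ε by linarith)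
  unfold AbstractRankInvariant.cornerE
  omega

lemma multInf_mono_ineq {u ε ε' : ℝ} (hε' : 0 < ε') (hee : ε' ≤ ε) (hadm : u + ε < 1/ε) :
    (R.ρ (u + ε') (1/ε') : ℤ) - R.ρ (u - ε') (1/ε') ≤ (R.ρ (u + ε) (1/ε) : ℤ) - R.ρ (u - ε) (1/ε) := by
  have hε : 0 < ε := lt_of_lt_of_le hε' hee
  have hinv : 1/ε ≤ 1/ε' := one_div_le_one_div_of_le hε' hee
  have j1 := R.jump (show u - ε' ≤ u + ε' by linarith) (show u + ε' < 1/ε by linarith) hinv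
  have m1 : R.ρ (u + ε') (1/ε) ≤ R.ρ (u + ε) (1/ε) := R.mono_u (by linarith) hadm
  have m2 : R.ρ (u - ε) (1/ε) ≤ R.ρ (u - ε') (1/ε) := R.mono_u (by linarith) (by linarith)
  omega

/-- a point above the `M₀` line has zero multiplicity. -/
lemma mult_zero_big {M₀ u v : ℝ} (huv : u < v) (hv : M₀ < v)
    (hM : ∀ u' w w' : ℝ, u' < w → u' < w' → M₀ ≤ w → M₀ ≤ w' → R.ρ u' w = R.ρ u' w') :
    R.mult u v = 0 := by
  set ε := min ((v - M₀)/2) ((v - u)/3) with hε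
  have h1 := min_le_left ((v - M₀)/2) ((v - u)/3)
  have h2 := min_le_right ((v - M₀)/2) ((v - u)/3)
  have hεpos : 0 < ε := lt_min (by linarith) (by linarith)
  have hadm : u + ε < v - ε := by
    have : ε ≤ (v - u)/3 := h2
    linarith
  have hMve : M₀ ≤ v - ε := by linarith
  have e1 : R.ρ (u + ε) (v - ε) = R.ρ (u + ε) (v + ε) :=
    hM _ _ _ hadm (by linarith) hMve (by linarith)
  have e2 : R.ρ (u - ε) (v - ε) = R.ρ (u - ε) (v + ε) :=
    hM _ _ _ (by linarith) (by linarith) hMve (by linarith)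
  have hE : R.cornerE u v ε = 0 := by
    unfold AbstractRankInvariant.cornerE; omega
  have h0 : (0:ℕ) ∈ (fun ε => (R.cornerE u v ε).toNat) '' {ε : ℝ | 0 < ε ∧ u + ε < v - ε} :=
    ⟨ε, ⟨hεpos, hadm⟩, show (R.cornerE u v ε).toNat = 0 by rw [hE]; rfl⟩
  exact Nat.eq_zero_of_le_zero (Nat.sInf_le h0)

/-- zero jump of `kf` above `V`. -/
lemma jmpA_kf_zero_big {vb V u v : ℝ} (hvV : vb ≤ V) (hv : V < v) :
    jmpA (kf R vb V u) v = 0 := by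
  apply jmpA_zero _ (show (V + v)/2 < v by linarith)
  have h1 : kf R vb V u ((V+v)/2) = kf R vb V u V := kf_const (by linarith)
  have h2 : kf R vb V u v = kf R vb V u V := kf_const (by linarith)
  rw [h1, h2]

/-- The main computation : `mult u v` equals the jump of `kf` at `v`. -/
lemma mult_eq_jmpA {vb V u v : ℝ} (hrc : R.RightContinuous)
    (hu : u < vb) (hv1 : vb < v) (hv2 : v ≤ V) :
    R.mult u v = jmpA (kf R vb V u) v := by
  have hvV : vb ≤ V := le_of_lt (lt_of_lt_of_le hv1 hv2)
  have huv : u < v := hu.trans hv1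
  set k := kf R vb V u with hk
  have kanti : Antitone k := kf_antitone hu hvV
  obtain ⟨η₁, hη₁, hη⟩ := lvalA_attain k kanti v
  set η₀ := min η₁ (min ((v - vb)/2) ((v - u)/3)) with hη₀
  have hη₀1 := min_le_left η₁ (min ((v - vb)/2) ((v - u)/3))
  have hη₀2 := (min_le_right η₁ (min ((v - vb)/2) ((v - u)/3))).trans
    (min_le_left ((v - vb)/2) ((v - u)/3))
  have hη₀3 := (min_le_right η₁ (min ((v - vb)/2) ((v - u)/3))).trans
    (min_le_right ((v - vb)/2) ((v - u)/3))
  have hη₀pos : 0 < η₀ := lt_min hη₁ (lt_min (by linarith) (by linarith))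
  have hconstk : ∀ η, 0 < η → η ≤ η₀ → k (v - η) = lvalA k v :=
    fun η a b => hη η a (b.trans hη₀1)
  set w' := v - η₀ with hw'
  have hw'1 : vb ≤ w' := by simp only [hw']; linarith
  have hw'2 : u < w' := by simp only [hw']; linarith
  have hw'3 : w' ≤ V := by simp only [hw']; linarith
  obtain ⟨δ₁, hδ₁, hc₁⟩ := (hrc u w' hw'2).1
  obtain ⟨δ₂, hδ₂, hc₂⟩ := (hrc u v huv).1
  obtain ⟨δ₃, hδ₃, hc₃⟩ := (hrc u v huv).2
  obtain ⟨e₁, he₁, hce₁⟩ := lam_attain (R := R) hw'2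
  obtain ⟨e₂, he₂, hce₂⟩ := lam_attain (R := R) huv
  obtain ⟨δ₄, hδ₄, hc₄⟩ := (hrc (u - e₂) v (by linarith)).2
  -- the "good" predicate
  set G : ℝ → Prop := fun ε => 0 < ε ∧ ε ≤ η₀ ∧ ε < δ₁ ∧ ε < δ₂ ∧ ε < δ₃ ∧
      ε ≤ e₁ ∧ ε ≤ e₂ ∧ ε < δ₄ with hG
  have key : ∀ ε, G ε → R.cornerE u v ε = (lvalA k v : ℤ) - (k v : ℤ) := by
    rintro ε ⟨hg0, hg1, hg2, hg3, hg4, hg5, hg6, hg7⟩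
    have hadm : u + ε < v - ε := by linarith
    have huvme : u < v - ε := by linarith
    -- value of k at v - ε and at w'
    have hkv : k v = R.ρ u v - lam R u v := kf_eq hu hvV hv1.le hv2
    have hkvme : k (v - ε) = R.ρ u (v - ε) - lam R u (v - ε) :=
      kf_eq hu hvV (by linarith) (by linarith)
    have hkw' : k w' = R.ρ u w' - lam R u w' := kf_eq hu hvV hw'1 hw'3
    have hkvme' : k (v - ε) = lvalA k v := hconstk ε hg0 hg1
    have hkw'' : k w' = lvalA k v := hconstk η₀ hη₀pos le_rfl
    -- A part
    have tAl1 : R.ρ u (v - ε) ≤ R.ρ (u + ε) (v - ε) := R.mono_u (by linarith) hadm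
    have tAl2 : R.ρ (u - ε) (v - ε) ≤ lam R u (v - ε) := lam_ge huvme hg0
    have lamle1 : lam R u (v - ε) ≤ R.ρ u (v - ε) := lam_le huvme
    have jA := R.jump (show u - ε ≤ u + ε by linarith)
      (show u + ε < w' by simp only [hw']; linarith) (show w' ≤ v - ε by simp only [hw']; linarith)
    have tAu1 : R.ρ (u + ε) w' = R.ρ u w' := hc₁ _ (by linarith) (by linarith) (by linarith)
    have tAu2 : R.ρ (u - ε) w' = lam R u w' := hce₁ ε hg0 hg5
    have lamle2 : lam R u w' ≤ R.ρ u w' := lam_le hw'2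
    -- B part
    have t1a : R.ρ (u + ε) (v + ε) ≤ R.ρ (u + ε) v := R.mono_v (by linarith) (by linarith)
    have t1b : R.ρ (u + ε) v = R.ρ u v := hc₂ _ (by linarith) (by linarith) (by linarith)
    have t1c : R.ρ u (v + ε) ≤ R.ρ (u + ε) (v + ε) := R.mono_u (by linarith) (by linarith)
    have t1d : R.ρ u (v + ε) = R.ρ u v := hc₃ _ (by linarith) (by linarith)
    have t2a : R.ρ (u - ε) (v + ε) ≤ R.ρ (u - ε) v := R.mono_v (by linarith) (by linarith)
    have t2b : R.ρ (u - ε) v = lam R u v := hce₂ ε hg0 hg6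
    have t2c : R.ρ (u - e₂) (v + ε) ≤ R.ρ (u - ε) (v + ε) := R.mono_u (by linarith) (by linarith)
    have t2d : R.ρ (u - e₂) (v + ε) = R.ρ (u - e₂) v := hc₄ _ (by linarith) (by linarith)
    have t2e : R.ρ (u - e₂) v = lam R u v := hce₂ e₂ he₂ le_rfl
    have lamle3 : lam R u v ≤ R.ρ u v := lam_le huv
    unfold AbstractRankInvariant.cornerE
    omega
  -- the good epsilon
  set εg := min η₀ (min (δ₁/2) (min (δ₂/2) (min (δ₃/2) (min e₁ (min e₂ (δ₄/2)))))) with hεg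
  have hεgpos : 0 < εg := by
    refine lt_min hη₀pos (lt_min (by linarith) (lt_min (by linarith)
      (lt_min (by linarith) (lt_min he₁ (lt_min he₂ (by linarith))))))
  have hεgG : ∀ ε, 0 < ε → ε ≤ εg → G ε := by
    intro ε h0' h1'
    have a1 : εg ≤ η₀ := min_le_left _ _
    have a2 : εg ≤ δ₁/2 := (min_le_right _ _).trans (min_le_left _ _)
    have a3 : εg ≤ δ₂/2 := (min_le_right _ _).trans ((min_le_right _ _).trans (min_le_left _ _))
    have a4 : εg ≤ δ₃/2 := (min_le_right _ _).trans ((min_le_right _ _).trans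
      ((min_le_right _ _).trans (min_le_left _ _)))
    have a5 : εg ≤ e₁ := (min_le_right _ _).trans ((min_le_right _ _).trans
      ((min_le_right _ _).trans ((min_le_right _ _).trans (min_le_left _ _))))
    have a6 : εg ≤ e₂ := (min_le_right _ _).trans ((min_le_right _ _).trans
      ((min_le_right _ _).trans ((min_le_right _ _).trans
        ((min_le_right _ _).trans (min_le_left _ _)))))
    have a7 : εg ≤ δ₄/2 := (min_le_right _ _).trans ((min_le_right _ _).trans
      ((min_le_right _ _).trans ((min_le_right _ _).trans
        ((min_le_right _ _).trans (min_le_right _ _)))))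
    exact ⟨h0', by linarith, by linarith, by linarith, by linarith, by linarith, by linarith,
      by linarith⟩
  have hkvle : k v ≤ lvalA k v := lvalA_ge k kanti v
  have hEg : R.cornerE u v εg = (lvalA k v : ℤ) - (k v : ℤ) := key εg (hεgG εg hεgpos le_rfl)
  have hadmg : u + εg < v - εg := by
    have : εg ≤ η₀ := min_le_left _ _
    linarith
  -- conclude
  have hmem : jmpA k v ∈ (fun ε => (R.cornerE u v ε).toNat) '' {ε : ℝ | 0 < ε ∧ u + ε < v - ε} := by
    refine ⟨εg, ⟨hεgpos, hadmg⟩, ?_⟩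
    simp only [hEg]
    unfold jmpA
    omega
  apply le_antisymm
  · exact Nat.sInf_le hmem
  · apply le_csInf ⟨_, hmem⟩
    rintro n ⟨ε, ⟨hε0, hεadm⟩, rfl⟩
    set ε' := min ε εg with hε'
    have hε'pos : 0 < ε' := lt_min hε0 hεgpos
    have h1 : R.cornerE u v ε' ≤ R.cornerE u v ε :=
      cornerE_nonneg_ineq hε'pos (min_le_left _ _) hεadm
    have h2 : R.cornerE u v ε' = (lvalA k v : ℤ) - (k v : ℤ) :=
      key ε' (hεgG ε' hε'pos (min_le_right _ _))
    show jmpA k v ≤ (R.cornerE u v ε).toNat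
    unfold jmpA
    omega

end MultEq
section MultInfEq

variable {R : AbstractRankInvariant}

lemma multInf_eq_jmpN {ub V u : ℝ} (hrc : R.RightContinuous) (M₀ : ℝ)
    (hM : ∀ u' w w' : ℝ, u' < w → u' < w' → M₀ ≤ w → M₀ ≤ w' → R.ρ u' w = R.ρ u' w')
    (hMV : M₀ ≤ V) (hu : u ≤ ub) (hubV : ub < V) :
    R.multInf u = jmpN (gf R ub V) u := by
  set g := gf R ub V with hg
  have gmono : Monotone g := gf_mono hubV
  have huV : u < V := lt_of_le_of_lt hu hubV
  obtain ⟨δ₁, hδ₁, hc₁⟩ := (hrc u V huV).1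
  obtain ⟨ε₀, hε₀, hcε₀⟩ := lvalN_attain g gmono u
  set C := max (max M₀ (u + 1)) 1 with hC
  have hC1 : (1:ℝ) ≤ C := le_max_right _ _
  have hC0 : (0:ℝ) < C := by linarith
  have hCM : M₀ ≤ C := (le_max_left _ _).trans (le_max_left _ _)
  have hCu : u + 1 ≤ C := (le_max_right M₀ (u+1)).trans (le_max_left _ _)
  set G : ℝ → Prop := fun ε => 0 < ε ∧ ε ≤ 1/C ∧ ε < 1 ∧ ε < δ₁ ∧ ε ≤ ε₀ ∧ ε < V - u with hG
  have key : ∀ ε, G ε → (u + ε < 1/ε) ∧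
      ((R.ρ (u + ε) (1/ε) : ℤ) - R.ρ (u - ε) (1/ε) = (g u : ℤ) - lvalN g u) := by
    rintro ε ⟨hg0, hg1, hg2, hg3, hg4, hg5⟩
    have hinvC : C ≤ 1/ε := by
      rw [le_div_iff₀ hg0]
      have := mul_le_mul_of_nonneg_left hg1 (le_of_lt hC0)
      rw [mul_one_div] at this
      calc C * ε ≤ C / C := this
        _ ≤ 1 := by rw [div_self (ne_of_gt hC0)]
    have hadm : u + ε < 1/ε := by linarith
    have hMinv : M₀ ≤ 1/ε := hCM.trans hinvC
    have e1 : R.ρ (u + ε) (1/ε) = R.ρ (u + ε) V := hM _ _ _ hadm (by linarith) hMinv hMV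
    have e2 : R.ρ (u + ε) V = R.ρ u V := hc₁ _ (by linarith) (by linarith) (by linarith)
    have e3 : R.ρ u V = g u := by
      show _ = R.ρ (min u ub) V
      rw [min_eq_left hu]
    have e4 : R.ρ (u - ε) (1/ε) = R.ρ (u - ε) V := hM _ _ _ (by linarith) (by linarith) hMinv hMV
    have e5 : R.ρ (u - ε) V = lvalN g u := by
      rw [← hcε₀ ε hg0 hg4]
      show _ = R.ρ (min (u - ε) ub) V
      rw [min_eq_left (by linarith)]
    refine ⟨hadm, ?_⟩
    rw [e1, e2, e3, e4, e5]
  set εg := min (1/C) (min (1/2) (min (δ₁/2) (min ε₀ ((V - u)/2)))) with hεg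
  have hεgpos : 0 < εg := by
    refine lt_min (by positivity) (lt_min (by norm_num) (lt_min (by linarith)
      (lt_min hε₀ (by linarith))))
  have hεgG : ∀ ε, 0 < ε → ε ≤ εg → G ε := by
    intro ε h0' h1'
    have a1 : εg ≤ 1/C := min_le_left _ _
    have a2 : εg ≤ 1/2 := (min_le_right _ _).trans (min_le_left _ _)
    have a3 : εg ≤ δ₁/2 := (min_le_right _ _).trans ((min_le_right _ _).trans (min_le_left _ _))
    have a4 : εg ≤ ε₀ := (min_le_right _ _).trans ((min_le_right _ _).trans
      ((min_le_right _ _).trans (min_le_left _ _)))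
    have a5 : εg ≤ (V - u)/2 := (min_le_right _ _).trans ((min_le_right _ _).trans
      ((min_le_right _ _).trans (min_le_right _ _)))
    exact ⟨h0', by linarith, by linarith, by linarith, by linarith, by linarith⟩
  have hlvle : lvalN g u ≤ g u := lvalN_le g gmono u
  obtain ⟨hadmg, hEg⟩ := key εg (hεgG εg hεgpos le_rfl)
  have hmem : jmpN g u ∈ (fun ε => ((R.ρ (u + ε) (1 / ε) : ℤ) - (R.ρ (u - ε) (1 / ε) : ℤ)).toNat) ''
      {ε : ℝ | 0 < ε ∧ u + ε < 1 / ε} := by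
    refine ⟨εg, ⟨hεgpos, hadmg⟩, ?_⟩
    show ((R.ρ (u + εg) (1 / εg) : ℤ) - (R.ρ (u - εg) (1 / εg) : ℤ)).toNat = jmpN g u
    rw [hEg]
    unfold jmpN
    omega
  apply le_antisymm
  · exact Nat.sInf_le hmem
  · apply le_csInf ⟨_, hmem⟩
    rintro n ⟨ε, ⟨hε0, hεadm⟩, rfl⟩
    set ε' := min ε εg with hε'
    have hε'pos : 0 < ε' := lt_min hε0 hεgpos
    obtain ⟨hadm', hE'⟩ := key ε' (hεgG ε' hε'pos (min_le_right _ _))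
    have h1 : (R.ρ (u + ε') (1/ε') : ℤ) - R.ρ (u - ε') (1/ε') ≤
        (R.ρ (u + ε) (1/ε) : ℤ) - R.ρ (u - ε) (1/ε) :=
      multInf_mono_ineq hε'pos (min_le_left _ _) hεadm
    show jmpN g u ≤ ((R.ρ (u + ε) (1 / ε) : ℤ) - (R.ρ (u - ε) (1 / ε) : ℤ)).toNat
    unfold jmpN
    omega

end MultInfEq

/-- **Representation Theorem.**  Let `ρ` be an abstract rank invariant,
right-continuous in each variable, with `ρ(u,v) = 0` whenever `u < m` (and
`u < v`), and `ρ(u,v) = ρ(u,v')` whenever `v, v' ≥ M₀` (with `u < v`, `u < v'`).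
Then for every `(ū,v̄) ∈ Δ⁺`, only finitely many points `(u,v) ∈ Δ⁺` with
`u ≤ ū`, `v > v̄` have `μ(u,v) ≠ 0` and only finitely many `u ≤ ū` have
`μ∞(u) ≠ 0`, and
`ρ(ū,v̄) = ∑_{u ≤ ū, v > v̄} μ(u,v) + ∑_{u ≤ ū} μ∞(u)`. -/
theorem representation_theorem (R : AbstractRankInvariant)
    (hrc : R.RightContinuous) (m M₀ : ℝ) (hmM : m ≤ M₀)
    (h0 : ∀ u v : ℝ, u < m → u < v → R.ρ u v = 0)
    (hM : ∀ u v v' : ℝ, u < v → u < v' → M₀ ≤ v → M₀ ≤ v' → R.ρ u v = R.ρ u v')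
    (ubar vbar : ℝ) (h : ubar < vbar) :
    {p : ℝ × ℝ | p.1 ≤ ubar ∧ vbar < p.2 ∧ R.mult p.1 p.2 ≠ 0}.Finite ∧
    {u : ℝ | u ≤ ubar ∧ R.multInf u ≠ 0}.Finite ∧
    R.ρ ubar vbar =
      (∑ᶠ p ∈ {p : ℝ × ℝ | p.1 ≤ ubar ∧ vbar < p.2}, R.mult p.1 p.2) +
        ∑ᶠ u ∈ {u : ℝ | u ≤ ubar}, R.multInf u := by
  classical
  set V := max M₀ (vbar + 1) with hV
  have hMV : M₀ ≤ V := le_max_left _ _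
  have hvV : vbar < V := lt_of_lt_of_le (by linarith) (le_max_right _ _)
  have hubV : ubar < V := h.trans hvV
  have hmV : m ≤ V := hmM.trans hMV
  set g := gf R ubar V with hg
  have gmono : Monotone g := gf_mono hubV
  obtain ⟨Gfin, Gsum⟩ := oneD g gmono (gf_hrc hubV hrc) (m - 1) (gf_zero hmV h0) ubar
  set hh := hf R ubar vbar V with hhh
  have hhmono : Monotone hh := hf_mono h hvV.le
  obtain ⟨Hfin, Hsum⟩ := oneD hh hhmono (hf_hrc h hvV.le hrc) (m - 1)
    (hf_zero h hmV h0) ubar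
  -- per-u facts
  have KEY : ∀ u : ℝ, u ≤ ubar →
      ({v : ℝ | vbar < v ∧ jmpA (kf R vbar V u) v ≠ 0}.Finite ∧
        (∑ᶠ v ∈ Set.Ioi vbar, jmpA (kf R vbar V u) v) = jmpN hh u) := by
    intro u hu
    have hu' : u < vbar := lt_of_le_of_lt hu h
    obtain ⟨fin, sum⟩ := oneD' (kf R vbar V u) (kf_antitone hu' hvV.le)
      (kf_hrc hu' hvV.le hrc) V (fun x hx => kf_const hx) vbar
    exact ⟨fin, sum.trans (jmpN_hf_eq hu' hvV.le hu h).symm⟩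
  have MEQ : ∀ u v : ℝ, u ≤ ubar → vbar < v → R.mult u v = jmpA (kf R vbar V u) v := by
    intro u v hu hv
    have hu' : u < vbar := lt_of_le_of_lt hu h
    rcases le_or_gt v V with hvV' | hvV'
    · exact mult_eq_jmpA hrc hu' hv hvV'
    · rw [mult_zero_big (hu'.trans hv) (lt_of_le_of_lt hMV hvV') hM,
        jmpA_kf_zero_big hvV.le hvV']
  have MIEQ : ∀ u : ℝ, u ≤ ubar → R.multInf u = jmpN g u :=
    fun u hu => multInf_eq_jmpN hrc M₀ hM hMV hu hubV
  -- supports (as finite sets)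
  have hVfin : ∀ u : ℝ, u ≤ ubar →
      (Set.Ioi vbar ∩ Function.support (jmpA (kf R vbar V u))).Finite :=
    fun u hu => ((KEY u hu).1).subset (fun x hx => ⟨hx.1, hx.2⟩)
  have hUfin : (Set.Iic ubar ∩ Function.support (jmpN hh)).Finite :=
    Hfin.subset (fun x hx => ⟨hx.1, hx.2⟩)
  -- nonzero jump of hh at first coordinates of support points
  have HNE : ∀ u v : ℝ, u ≤ ubar → vbar < v → jmpA (kf R vbar V u) v ≠ 0 →
      jmpN hh u ≠ 0 := by
    intro u v hu hv hne
    rw [← (KEY u hu).2, finsum_mem_eq_sum _ (hVfin u hu)]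
    intro hzero
    have := (Finset.sum_eq_zero_iff.mp hzero) v
      ((hVfin u hu).mem_toFinset.mpr ⟨hv, hne⟩)
    exact hne this
  -- first finiteness
  have fin1 : {p : ℝ × ℝ | p.1 ≤ ubar ∧ vbar < p.2 ∧ R.mult p.1 p.2 ≠ 0}.Finite := by
    apply Set.Finite.subset (Set.Finite.biUnion Hfin
      (fun u hu => Set.Finite.image (fun v => (u, v)) (KEY u hu.1).1))
    rintro p ⟨h1, h2, h3⟩
    have h4 : jmpA (kf R vbar V p.1) p.2 ≠ 0 := by rw [← MEQ p.1 p.2 h1 h2]; exact h3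
    apply Set.mem_biUnion (show p.1 ∈ {u : ℝ | u ≤ ubar ∧ jmpN hh u ≠ 0} from
      ⟨h1, HNE p.1 p.2 h1 h2 h4⟩)
    exact ⟨p.2, ⟨h2, h4⟩, rfl⟩
  have fin2 : {u : ℝ | u ≤ ubar ∧ R.multInf u ≠ 0}.Finite := by
    apply Gfin.subset
    rintro x ⟨h1, h2⟩
    exact ⟨h1, by rw [← MIEQ x h1]; exact h2⟩
  refine ⟨fin1, fin2, ?_⟩
  -- the sum at infinity
  have Sum2 : (∑ᶠ u ∈ {u : ℝ | u ≤ ubar}, R.multInf u) = R.ρ ubar V := by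
    have e1 : (∑ᶠ u ∈ {u : ℝ | u ≤ ubar}, R.multInf u) = ∑ᶠ u ∈ Set.Iic ubar, jmpN g u :=
      finsum_mem_congr rfl (fun u hu => MIEQ u hu)
    rw [e1, Gsum]
    show R.ρ (min ubar ubar) V = _
    rw [min_self]
  -- the 2-dimensional sum
  set F : ℝ × ℝ → ℕ := fun p => R.mult p.1 p.2 with hF
  have hTfin : ({p : ℝ × ℝ | p.1 ≤ ubar ∧ vbar < p.2} ∩ Function.support F).Finite :=
    fin1.subset (fun p hp => ⟨hp.1.1, hp.1.2, hp.2⟩)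
  set Vset : ℝ → Finset ℝ := fun u =>
    if hu : u ≤ ubar then (hVfin u hu).toFinset else ∅ with hVset
  have hVeq : ∀ u (hu : u ≤ ubar), Vset u = (hVfin u hu).toFinset := by
    intro u hu
    simp only [hVset, dif_pos hu]
  have hVmem : ∀ u, u ≤ ubar → ∀ v : ℝ,
      (v ∈ Vset u ↔ (vbar < v ∧ jmpA (kf R vbar V u) v ≠ 0)) := by
    intro u hu v
    rw [hVeq u hu, Set.Finite.mem_toFinset]
    exact Iff.rfl
  set P : Finset (ℝ × ℝ) :=
    hUfin.toFinset.biUnion (fun u => (Vset u).image (fun v => (u, v))) with hP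
  have Sum1 : (∑ᶠ p ∈ {p : ℝ × ℝ | p.1 ≤ ubar ∧ vbar < p.2}, R.mult p.1 p.2) = hh ubar := by
    rw [finsum_mem_eq_sum F hTfin]
    have hsub : hTfin.toFinset ⊆ P := by
      intro p hp
      rw [Set.Finite.mem_toFinset] at hp
      obtain ⟨⟨h1, h2⟩, h3⟩ := hp
      have h4 : jmpA (kf R vbar V p.1) p.2 ≠ 0 := by
        rw [← MEQ p.1 p.2 h1 h2]; exact h3
      apply Finset.mem_biUnion.mpr
      refine ⟨p.1, hUfin.mem_toFinset.mpr ⟨h1, HNE p.1 p.2 h1 h2 h4⟩, ?_⟩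
      apply Finset.mem_image.mpr
      exact ⟨p.2, (hVmem p.1 h1 p.2).mpr ⟨h2, h4⟩, rfl⟩
    have hzero : ∀ p ∈ P, p ∉ hTfin.toFinset → F p = 0 := by
      intro p hp hnp
      obtain ⟨u, hu, hpu⟩ := Finset.mem_biUnion.mp hp
      obtain ⟨v, hv, rfl⟩ := Finset.mem_image.mp hpu
      have hu' : u ≤ ubar := (hUfin.mem_toFinset.mp hu).1
      have hv' := (hVmem u hu' v).mp hv
      by_contra hne
      exact hnp (hTfin.mem_toFinset.mpr ⟨⟨hu', hv'.1⟩, hne⟩)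
    rw [Finset.sum_subset hsub hzero]
    have hdisj : (↑hUfin.toFinset : Set ℝ).PairwiseDisjoint
        (fun u => (Vset u).image (fun v => (u, v))) := by
      intro u₁ _ u₂ _ hne
      apply Finset.disjoint_left.mpr
      intro p hp1 hp2
      obtain ⟨v₁, _, rfl⟩ := Finset.mem_image.mp hp1
      obtain ⟨v₂, _, he⟩ := Finset.mem_image.mp hp2
      exact hne (congrArg Prod.fst he).symm
    rw [hP, Finset.sum_biUnion hdisj]
    have inner : ∀ u ∈ hUfin.toFinset,
        (∑ p ∈ (Vset u).image (fun v => (u, v)), F p) = jmpN hh u := by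
      intro u hu
      have hu' : u ≤ ubar := (hUfin.mem_toFinset.mp hu).1
      rw [Finset.sum_image (fun v₁ _ v₂ _ he => congrArg Prod.snd he)]
      have e1 : ∀ v ∈ Vset u, F (u, v) = jmpA (kf R vbar V u) v := by
        intro v hv
        have hv' := (hVmem u hu' v).mp hv
        exact MEQ u v hu' hv'.1
      rw [Finset.sum_congr rfl e1]
      have e2 : (∑ v ∈ Vset u, jmpA (kf R vbar V u) v)
          = ∑ᶠ v ∈ Set.Ioi vbar, jmpA (kf R vbar V u) v := by
        rw [finsum_mem_eq_sum _ (hVfin u hu'), hVeq u hu']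
      rw [e2, (KEY u hu').2]
    rw [Finset.sum_congr rfl inner]
    rw [← finsum_mem_eq_sum _ hUfin]
    exact Hsum
  rw [Sum1, Sum2]
  have d1 : hh ubar = R.ρ ubar vbar - R.ρ ubar V := by
    show R.ρ (min ubar ubar) vbar - R.ρ (min ubar ubar) V = _
    rw [min_self]
  have d2 : R.ρ ubar V ≤ R.ρ ubar vbar := R.mono_v h hvV.le
  omega
end
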